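/- arXiv:math/0405524 — 7 statements merged into one kernel-verified Lean document; each statement's English description precedes it below -/
import Mathlib

section
/- The intersection matrix M_n of the plumbing graph G_n (a star-shaped tree with a central vertex of weight -1 joined to three vertices of weights -2, -3, -7, where the vertex of weight -7 is the start of a chain of n-1 further vertices each of weight -2) is negative definite and unimodular (determinant ±1). -/
/-- Weight of vertex `i` (0-indexed) in the plumbing graph `G n` for `Σ(2,3,6n+1)`. -/
def wt (i : ℕ) : ℤ :=
  if i = 0 then -1 else if i = 1 then -2 else if i = 2 then -3 else if i = 3 then -7 else -2

/-- Adjacency: vertex 0 joined to 1,2,3; vertices 3,4,…,n+2 form a chain. -/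
def adjG (i j : ℕ) : Prop :=
  (i = 0 ∧ (j = 1 ∨ j = 2 ∨ j = 3)) ∨ (j = 0 ∧ (i = 1 ∨ i = 2 ∨ i = 3)) ∨
    (3 ≤ i ∧ 3 ≤ j ∧ (i + 1 = j ∨ j + 1 = i))

instance (i j : ℕ) : Decidable (adjG i j) := by unfold adjG; infer_instance

/-- The intersection matrix of the plumbing graph `G n` (n+3 vertices). -/
def MG (n : ℕ) : Matrix (Fin (n + 3)) (Fin (n + 3)) ℤ :=
  fun i j => if i = j then wt i.val else if adjG i.val j.val then 1 else 0

/-- Adding `2 PD[v]` to a characteristic vector recorded by its pairing sequence. -/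
def applyMove {V : Type*} (M : Matrix V V ℤ) (K : V → ℤ) (v : V) : V → ℤ :=
  fun i => K i + 2 * M v i

/-- Result of performing the moves in the list `l` in order. -/
def pathEnd {V : Type*} (M : Matrix V V ℤ) (K : V → ℤ) (l : List V) : V → ℤ :=
  l.foldl (applyMove M) K

/-- Each move in the list is performed at a vertex `v` with `K·v + v·v = 0`. -/
def PathLegal {V : Type*} (M : Matrix V V ℤ) : (V → ℤ) → List V → Prop
  | _, [] => True
  | K, v :: l => K v + M v v = 0 ∧ PathLegal M (applyMove M K v) l

/-- `v·v + 2 ≤ K·v ≤ -v·v` for every vertex `v`. -/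
def InBounds {V : Type*} (M : Matrix V V ℤ) (K : V → ℤ) : Prop :=
  ∀ v, M v v + 2 ≤ K v ∧ K v ≤ -(M v v)

/-- `K` supports a good full path: a legal sequence of moves ending at `K'` with
`-K'` satisfying the inequalities. -/
def HasGoodPath {V : Type*} (M : Matrix V V ℤ) (K : V → ℤ) : Prop :=
  ∃ l, PathLegal M K l ∧ InBounds M (fun v => -(pathEnd M K l v))

/-- A bad full path: legal moves reaching a vector with `K'·v + v·v > 0` for some `v`. -/
def BadFullPath {V : Type*} (M : Matrix V V ℤ) (K : V → ℤ) (l : List V) : Prop :=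
  PathLegal M K l ∧ ∃ v, pathEnd M K l v + M v v > 0

/-- The basic vectors `K_j`, `1 ≤ j ≤ n+1`, recorded as pairing sequences. -/
def Kv (n j : ℕ) : Fin (n + 3) → ℤ := fun i =>
  if i.val = 0 then 1 else if i.val = 1 then 0 else if i.val = 2 then -1
  else if i.val = 3 then (if j = 2 then -3 else -5)
  else if 3 ≤ j ∧ i.val = j + 1 then 2 else 0

lemma MG_val (m : ℕ) (i j : Fin (m+3)) :
    MG m i j = if (i:ℕ) = (j:ℕ) then wt i else if adjG i j then 1 else 0 := by
  simp only [MG, Fin.ext_iff]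

lemma MG_eq (m n : ℕ) (i j : Fin (m+3)) (i' j' : Fin (n+3)) (hi : (i:ℕ) = (i':ℕ))
    (hj : (j:ℕ) = (j':ℕ)) : MG m i j = MG n i' j' := by
  rw [MG_val, MG_val, hi, hj]

lemma wt_big {i : ℕ} (h : 4 ≤ i) : wt i = -2 := by
  unfold wt; rw [if_neg (by omega), if_neg (by omega), if_neg (by omega), if_neg (by omega)]

lemma succAbove_val_of_lt {m : ℕ} (p : Fin (m+1)) (q : Fin m) (h : (q:ℕ) < (p:ℕ)) :
    ((p.succAbove q : Fin (m+1)) : ℕ) = q := by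
  rw [Fin.succAbove_of_castSucc_lt p q (by rwa [Fin.lt_def])]; rfl

lemma succAbove_val_of_ge {m : ℕ} (p : Fin (m+1)) (q : Fin m) (h : (p:ℕ) ≤ (q:ℕ)) :
    ((p.succAbove q : Fin (m+1)) : ℕ) = q + 1 := by
  rw [Fin.succAbove_of_le_castSucc p q (by rwa [Fin.le_def])]; rfl

lemma dsum (m : ℕ) (f : Fin (m+1) → Fin (m+1) → ℤ) :
    ∑ i, ∑ j, f i j = (∑ i : Fin m, ∑ j : Fin m, f i.castSucc j.castSucc)
      + (∑ i : Fin m, f i.castSucc (Fin.last m)) + (∑ j : Fin m, f (Fin.last m) j.castSucc)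
      + f (Fin.last m) (Fin.last m) := by
  simp only [Fin.sum_univ_castSucc, Finset.sum_add_distrib]; ring

lemma expandQ (m : ℕ) (M : Matrix (Fin m) (Fin m) ℤ) (y : Fin m → ℤ) :
    dotProduct y (M.mulVec y) = ∑ i, ∑ j, y i * M i j * y j := by
  simp [dotProduct, Matrix.mulVec, Finset.mul_sum, mul_assoc]

lemma Qsplit (n : ℕ) (hn : 1 ≤ n) (x : Fin (n+1+3) → ℤ) :
    dotProduct x ((MG (n+1)).mulVec x)
      = dotProduct (fun i : Fin (n+3) => x i.castSucc)
          ((MG n).mulVec (fun i : Fin (n+3) => x i.castSucc))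
        - 2 * x (Fin.last (n+3)) ^ 2
        + 2 * x ((Fin.last (n+2)).castSucc) * x (Fin.last (n+3)) := by
  rw [expandQ, expandQ, dsum (n+3)]
  have hA : (∑ i : Fin (n+3), ∑ j : Fin (n+3),
      x i.castSucc * MG (n+1) i.castSucc j.castSucc * x j.castSucc)
      = ∑ i : Fin (n+3), ∑ j : Fin (n+3), x i.castSucc * MG n i j * x j.castSucc := by
    refine Finset.sum_congr rfl fun i _ => Finset.sum_congr rfl fun j _ => ?_
    rw [MG_eq (n+1) n i.castSucc j.castSucc i j (by simp) (by simp)]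
  have hB : (∑ i : Fin (n+3), x i.castSucc * MG (n+1) i.castSucc (Fin.last (n+3)) * x (Fin.last (n+3)))
      = x ((Fin.last (n+2)).castSucc) * x (Fin.last (n+3)) := by
    rw [Fin.sum_univ_castSucc]
    rw [Finset.sum_eq_zero (fun i _ => ?_)]
    · have : MG (n+1) ((Fin.last (n+2)).castSucc) (Fin.last (n+3)) = 1 := by
        rw [MG_val, if_neg (by simp only [Fin.coe_castSucc, Fin.val_last]; omega), if_pos (by simp only [adjG, Fin.coe_castSucc, Fin.val_last, true_or, or_true, and_true]; omega)]
      rw [this]; ring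
    · have : MG (n+1) (i.castSucc.castSucc) (Fin.last (n+3)) = 0 := by
        rw [MG_val, if_neg (by simp only [Fin.coe_castSucc, Fin.val_last]; omega), if_neg ?_]
        simp only [adjG, Fin.coe_castSucc, Fin.val_last]
        have := i.is_lt; omega
      rw [this]; ring
  have hC : (∑ j : Fin (n+3), x (Fin.last (n+3)) * MG (n+1) (Fin.last (n+3)) j.castSucc * x j.castSucc)
      = x (Fin.last (n+3)) * x ((Fin.last (n+2)).castSucc) := by
    rw [Fin.sum_univ_castSucc]
    rw [Finset.sum_eq_zero (fun j _ => ?_)]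
    · have : MG (n+1) (Fin.last (n+3)) ((Fin.last (n+2)).castSucc) = 1 := by
        rw [MG_val, if_neg (by simp only [Fin.coe_castSucc, Fin.val_last]; omega), if_pos (by simp only [adjG, Fin.coe_castSucc, Fin.val_last, true_or, or_true, and_true]; omega)]
      rw [this]; ring
    · have : MG (n+1) (Fin.last (n+3)) (j.castSucc.castSucc) = 0 := by
        rw [MG_val, if_neg (by simp only [Fin.coe_castSucc, Fin.val_last]; omega), if_neg ?_]
        simp only [adjG, Fin.coe_castSucc, Fin.val_last]
        have := j.is_lt; omega
      rw [this]; ring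
  have hD : MG (n+1) (Fin.last (n+3)) (Fin.last (n+3)) = -2 := by
    rw [MG_val, if_pos rfl, wt_big (by simp only [Fin.val_last]; omega)]
  rw [hA, hB, hC, hD]
  ring

lemma negdef : ∀ n, 1 ≤ n → ∀ x : Fin (n+3) → ℤ,
    dotProduct x ((MG n).mulVec x) ≤ -(x (Fin.last (n+2)))^2 ∧
    (dotProduct x ((MG n).mulVec x) = 0 → x = 0) := by
  refine Nat.le_induction ?_ ?_
  · intro x
    have hmat : MG 1 = !![-1,1,1,1;1,-2,0,0;1,0,-3,0;1,0,0,-7] := by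
      ext i j; fin_cases i <;> fin_cases j <;> rfl
    have hQ : dotProduct x ((MG 1).mulVec x)
        = -(x 0)^2 - 2*(x 1)^2 - 3*(x 2)^2 - 7*(x 3)^2
          + 2*(x 0)*(x 1) + 2*(x 0)*(x 2) + 2*(x 0)*(x 3) := by
      rw [expandQ, hmat]
      simp [Fin.sum_univ_four, Matrix.vecHead, Matrix.vecTail, Function.comp]
      ring
    have hlast : Fin.last 3 = (3 : Fin 4) := rfl
    rw [hlast, hQ]
    constructor
    · nlinarith [sq_nonneg (2*(x 1) - x 0), sq_nonneg (3*(x 2) - x 0), sq_nonneg (x 0 - 6*(x 3))]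
    · intro h0
      have h3 : x 3 = 0 := by
        nlinarith [sq_nonneg (2*(x 1) - x 0), sq_nonneg (3*(x 2) - x 0), sq_nonneg (x 0 - 6*(x 3))]
      have h0' : x 0 = 0 := by
        nlinarith [sq_nonneg (2*(x 1) - x 0), sq_nonneg (3*(x 2) - x 0), sq_nonneg (x 0 - 6*(x 3))]
      have h1 : x 1 = 0 := by nlinarith [sq_nonneg (3*(x 2) - x 0)]
      have h2 : x 2 = 0 := by nlinarith [sq_nonneg (2*(x 1) - x 0)]
      funext i
      fin_cases i <;> simp [h0', h1, h2, h3]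
  · intro n hn ih x
    have hs := Qsplit n hn x
    obtain ⟨h1, h2⟩ := ih (fun i => x i.castSucc)
    constructor
    · rw [hs]
      nlinarith [h1, sq_nonneg (x (Fin.last (n+3)) - x ((Fin.last (n+2)).castSucc))]
    · intro h0
      rw [hs] at h0
      have hsq : (x (Fin.last (n+3)) - x ((Fin.last (n+2)).castSucc))^2
          + (x (Fin.last (n+3)))^2 ≤ 0 := by nlinarith [h1]
      have ha : x (Fin.last (n+3)) = 0 := by nlinarith [sq_nonneg (x (Fin.last (n+3)) - x ((Fin.last (n+2)).castSucc)), sq_nonneg (x (Fin.last (n+3)))]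
      have hb : x ((Fin.last (n+2)).castSucc) = 0 := by nlinarith [sq_nonneg (x (Fin.last (n+3)) - x ((Fin.last (n+2)).castSucc)), sq_nonneg (x (Fin.last (n+3)))]
      have hQ' : dotProduct (fun i : Fin (n+3) => x i.castSucc)
          ((MG n).mulVec (fun i => x i.castSucc)) = 0 := by
        rw [ha, hb] at h0; linarith
      have hx' := h2 hQ'
      funext i
      refine Fin.lastCases ?_ ?_ i
      · exact ha
      · intro j
        exact congrFun hx' j

lemma MG_sub3 (k : ℕ) : (MG (k+3)).submatrix Fin.castSucc Fin.castSucc = MG (k+2) := by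
  ext i j; exact MG_eq _ _ _ _ i j (by simp) (by simp)


lemma detB (k : ℕ) :
    ((MG (k+3)).submatrix (Fin.last (k+5)).succAbove
      ((Fin.last (k+4)).castSucc).succAbove).det = (MG (k+1)).det := by
  rw [Fin.succAbove_last]
  rw [Matrix.det_succ_column _ (Fin.last (k+4)), Fin.sum_univ_castSucc]
  have hz : ∀ i : Fin (k+4),
      (MG (k+3)).submatrix Fin.castSucc ((Fin.last (k+4)).castSucc).succAbove
        i.castSucc (Fin.last (k+4)) = 0 := by
    intro i
    show MG (k+3) _ _ = 0
    rw [MG_val, if_neg ?h1, if_neg ?h2]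
    case h1 =>
      have h := succAbove_val_of_ge ((Fin.last (k+4)).castSucc) (Fin.last (k+4)) (by simp)
      simp only [Fin.coe_castSucc, Fin.val_last] at h ⊢
      omega
    case h2 =>
      have h := succAbove_val_of_ge ((Fin.last (k+4)).castSucc) (Fin.last (k+4)) (by simp)
      simp only [adjG, Fin.coe_castSucc, Fin.val_last] at h ⊢
      rw [h]
      have := i.is_lt
      omega
  rw [Finset.sum_eq_zero (fun i _ => by rw [hz i]; ring), zero_add]
  have hsign : ((-1:ℤ)) ^ ((Fin.last (k+4)).val + (Fin.last (k+4)).val) = 1 := by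
    refine Even.neg_one_pow ⟨k+4, ?_⟩
    simp [Fin.val_last]
  rw [hsign]
  have hentry : (MG (k+3)).submatrix Fin.castSucc ((Fin.last (k+4)).castSucc).succAbove
      (Fin.last (k+4)) (Fin.last (k+4)) = 1 := by
    show MG (k+3) _ _ = 1
    have h := succAbove_val_of_ge ((Fin.last (k+4)).castSucc) (Fin.last (k+4)) (by simp)
    rw [MG_val, if_neg ?h1, if_pos ?h2]
    case h1 =>
      simp only [Fin.coe_castSucc, Fin.val_last] at h ⊢
      omega
    case h2 =>
      simp only [adjG, Fin.coe_castSucc, Fin.val_last] at h ⊢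
      rw [h]
      omega
  rw [hentry]
  have hmin : ((MG (k+3)).submatrix Fin.castSucc
      ((Fin.last (k+4)).castSucc).succAbove).submatrix (Fin.last (k+4)).succAbove
        (Fin.last (k+4)).succAbove = MG (k+1) := by
    rw [Fin.succAbove_last]
    ext i j
    show MG (k+3) _ _ = MG (k+1) i j
    refine MG_eq _ _ _ _ i j (by simp) ?_
    have h := succAbove_val_of_lt ((Fin.last (k+4)).castSucc) j.castSucc
      (by simp only [Fin.coe_castSucc, Fin.val_last]; exact j.is_lt)
    simp only [Fin.coe_castSucc] at h ⊢
    exact h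
  rw [hmin]
  ring

lemma det_rec (k : ℕ) : (MG (k+3)).det = -2 * (MG (k+2)).det - (MG (k+1)).det := by
  rw [Matrix.det_succ_row (MG (k+3)) (Fin.last (k+5)), Fin.sum_univ_castSucc,
    Fin.sum_univ_castSucc]
  have hz : ∀ i : Fin (k+4), MG (k+3) (Fin.last (k+5)) i.castSucc.castSucc = 0 := by
    intro i
    rw [MG_val, if_neg ?h1, if_neg ?h2]
    case h1 =>
      simp only [Fin.coe_castSucc, Fin.val_last]
      have := i.is_lt; omega
    case h2 =>
      simp only [adjG, Fin.coe_castSucc, Fin.val_last]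
      have := i.is_lt; omega
  rw [Finset.sum_eq_zero (fun i _ => by rw [hz i]; ring), zero_add]
  have hsign1 : ((-1:ℤ)) ^ ((Fin.last (k+5)).val + ((Fin.last (k+4)).castSucc : Fin (k+6)).val) = -1 := by
    refine Odd.neg_one_pow ⟨k+4, ?_⟩
    simp only [Fin.coe_castSucc, Fin.val_last]
    ring
  have hsign2 : ((-1:ℤ)) ^ ((Fin.last (k+5)).val + (Fin.last (k+5)).val) = 1 := by
    refine Even.neg_one_pow ⟨k+5, ?_⟩
    simp [Fin.val_last]
  rw [hsign1, hsign2]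
  have hentry1 : MG (k+3) (Fin.last (k+5)) (Fin.last (k+4)).castSucc = 1 := by
    rw [MG_val, if_neg ?h1, if_pos ?h2]
    case h1 => simp only [Fin.coe_castSucc, Fin.val_last]; omega
    case h2 =>
      simp only [adjG, Fin.coe_castSucc, Fin.val_last, true_or, or_true, and_true]
      omega
  have hentry2 : MG (k+3) (Fin.last (k+5)) (Fin.last (k+5)) = -2 := by
    rw [MG_val, if_pos rfl, wt_big (by simp only [Fin.val_last]; omega)]
  rw [hentry1, hentry2, detB k]
  have hmin : ((MG (k+3)).submatrix (Fin.last (k+5)).succAbove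
      (Fin.last (k+5)).succAbove).det = (MG (k+2)).det := by
    rw [Fin.succAbove_last, MG_sub3]
  rw [hmin]
  ring

lemma detMG1 : (MG 1).det = 1 := by
  have h : MG 1 = !![-1,1,1,1;1,-2,0,0;1,0,-3,0;1,0,0,-7] := by
    ext i j; fin_cases i <;> fin_cases j <;> rfl
  rw [h]
  simp [Matrix.det_succ_row_zero, Fin.sum_univ_succ]; decide

lemma detMG2 : (MG 2).det = -1 := by
  have h : MG 2 = !![-1,1,1,1,0;1,-2,0,0,0;1,0,-3,0,0;1,0,0,-7,1;0,0,0,1,-2] := by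
    ext i j; fin_cases i <;> fin_cases j <;> rfl
  rw [h]
  simp [Matrix.det_succ_row_zero, Fin.sum_univ_succ]; decide

set_option maxRecDepth 4000 in
lemma detMG : ∀ k : ℕ, (MG (k+1)).det = (-1:ℤ)^k := by
  have aux : ∀ k, (MG (k+1)).det = (-1:ℤ)^k ∧ (MG (k+2)).det = (-1:ℤ)^(k+1) := by
    intro k
    induction k with
    | zero =>
      exact ⟨by simpa using detMG1, by simpa using detMG2⟩
    | succ k ih =>
      refine ⟨ih.2, ?_⟩
      show (MG (k+3)).det = (-1:ℤ)^(k+2)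
      rw [det_rec k, ih.1, ih.2]
      ring
  exact fun k => (aux k).1


/-- the intersection matrix `M_n` of `G_n` is negative definite and
unimodular. -/
theorem MG_negDef_unimodular (n : ℕ) (hn : 1 ≤ n) :
    (∀ x : Fin (n + 3) → ℤ, x ≠ 0 → dotProduct x ((MG n).mulVec x) < 0) ∧
      ((MG n).det = 1 ∨ (MG n).det = -1) := by
  constructor
  · intro x hx
    have h := negdef n hn x
    have hle : dotProduct x ((MG n).mulVec x) ≤ 0 :=
      le_trans h.1 (neg_nonpos.mpr (sq_nonneg _))
    exact lt_of_le_of_ne hle (fun h0 => hx (h.2 h0))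
  · obtain ⟨m, rfl⟩ : ∃ m, n = m + 1 := ⟨n - 1, by omega⟩
    rw [detMG m]
    rcases Nat.even_or_odd m with he | ho
    · left; exact he.neg_one_pow
    · right; exact ho.neg_one_pow
end

section
/- For every n ≥ 1 and every 1 ≤ j ≤ n+1, the vector K_j satisfies K_j · K_j + (n+3) = 0, where K_j·K_j is computed using the inverse of the intersection matrix M_n; equivalently, the renormalized length (K_j·K_j + |G_n|)/4 equals 0. -/
/-- ℕ-indexed version of the intersection matrix entries. -/
def Mf (i k : ℕ) : ℤ := if i = k then wt i else if adjG i k then 1 else 0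

/-- Explicit closed form for the inverse of `MG n` (entries, ℕ-indexed). -/
def Bf (n i j : ℕ) : ℤ :=
  if i = 0 then
    (if j = 0 then -(36*(n:ℤ)+6) else if j = 1 then -(18*(n:ℤ)+3)
     else if j = 2 then -(12*(n:ℤ)+2) else -6*((n:ℤ)+3-j))
  else if i = 1 then
    (if j = 0 then -(18*(n:ℤ)+3) else if j = 1 then -(9*(n:ℤ)+2)
     else if j = 2 then -(6*(n:ℤ)+1) else -3*((n:ℤ)+3-j))
  else if i = 2 then
    (if j = 0 then -(12*(n:ℤ)+2) else if j = 1 then -(6*(n:ℤ)+1)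
     else if j = 2 then -(4*(n:ℤ)+1) else -2*((n:ℤ)+3-j))
  else
    (if j = 0 then -6*((n:ℤ)+3-i) else if j = 1 then -3*((n:ℤ)+3-i)
     else if j = 2 then -2*((n:ℤ)+3-i) else -((n:ℤ)+3-(max i j : ℕ)))

/-- The matrix version of `Bf`. -/
def BM (n : ℕ) : Matrix (Fin (n + 3)) (Fin (n + 3)) ℤ := fun i j => Bf n i.val j.val

lemma Mf_zero {i k : ℕ} (h1 : i ≠ k) (h2 : ¬ adjG i k) : Mf i k = 0 := by
  simp [Mf, h1, h2]

lemma Mf_adj {i k : ℕ} (h1 : i ≠ k) (h2 : adjG i k) : Mf i k = 1 := by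
  simp [Mf, h1, h2]

lemma Mf_diag (i : ℕ) : Mf i i = wt i := by simp [Mf]

lemma Bf_big {n i j : ℕ} (h : 3 ≤ i) :
    Bf n i j = (if j = 0 then -6*((n:ℤ)+3-i) else if j = 1 then -3*((n:ℤ)+3-i)
     else if j = 2 then -2*((n:ℤ)+3-i) else -((n:ℤ)+3-(max i j : ℕ))) := by
  unfold Bf
  rw [if_neg (by omega), if_neg (by omega), if_neg (by omega)]

lemma key (n : ℕ) (hn : 1 ≤ n) (i j : ℕ) (hi : i < n + 3) (hj : j < n + 3) :
    ∑ k ∈ Finset.range (n + 3), Mf i k * Bf n k j = if i = j then 1 else 0 := by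
  rcases eq_or_lt_of_le hn with h1 | hn2
  · -- n = 1
    subst h1
    interval_cases i <;> interval_cases j <;> decide
  · have hn2 : 2 ≤ n := hn2
    rcases Nat.lt_or_ge i 4 with hi4 | hi4
    · -- i ≤ 3 : support within range 5
      rw [← Finset.sum_subset (Finset.range_subset_range.2 (by omega : 5 ≤ n + 3))
          (fun k hk hk5 => by
            rw [Mf_zero (by simp [Finset.mem_range] at hk5 ⊢; omega)
              (by simp [Finset.mem_range] at hk5; unfold adjG; omega), zero_mul])]
      rw [Finset.sum_range_succ, Finset.sum_range_succ, Finset.sum_range_succ,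
        Finset.sum_range_succ, Finset.sum_range_succ, Finset.sum_range_zero]
      rw [Bf_big (by norm_num : (3:ℕ) ≤ 3), Bf_big (by norm_num : (3:ℕ) ≤ 4)]
      interval_cases i <;> simp [Mf, wt, adjG, Bf] <;> split_ifs <;> push_cast <;> omega
    · rcases Nat.lt_or_ge i (n + 2) with him | hlast
      · -- middle chain vertex : 4 ≤ i ≤ n+1, support {i-1, i, i+1}
        rw [← Finset.sum_subset
            (show insert (i-1) (insert i ({i+1} : Finset ℕ)) ⊆ Finset.range (n+3) by
              intro k hk; simp only [Finset.mem_insert, Finset.mem_singleton] at hk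
              simp only [Finset.mem_range]; omega)
            (fun k hk hks => by
              simp only [Finset.mem_insert, Finset.mem_singleton] at hks
              rw [Mf_zero (by omega) (by unfold adjG; omega), zero_mul])]
        rw [Finset.sum_insert (by simp only [Finset.mem_insert, Finset.mem_singleton]; omega),
          Finset.sum_insert (by simp only [Finset.mem_singleton]; omega),
          Finset.sum_singleton]
        rw [Mf_adj (by omega) (by unfold adjG; omega), Mf_diag,
          Mf_adj (by omega) (by unfold adjG; omega), wt_big (by omega)]
        rw [Bf_big (show 3 ≤ i - 1 by omega), Bf_big (show 3 ≤ i by omega),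
          Bf_big (show 3 ≤ i + 1 by omega)]
        split_ifs <;> push_cast <;> omega
      · -- last vertex i = n+2, support {n+1, n+2}
        have hieq : i = n + 2 := by omega
        subst hieq
        rw [← Finset.sum_subset
            (show insert (n+1) ({n+2} : Finset ℕ) ⊆ Finset.range (n+3) by
              intro k hk; simp only [Finset.mem_insert, Finset.mem_singleton] at hk
              simp only [Finset.mem_range]; omega)
            (fun k hk hks => by
              simp only [Finset.mem_insert, Finset.mem_singleton] at hks
              simp only [Finset.mem_range] at hk
              rw [Mf_zero (by omega) (by unfold adjG; omega), zero_mul])]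
        rw [Finset.sum_insert (by simp only [Finset.mem_singleton]; omega),
          Finset.sum_singleton]
        rw [Mf_adj (by omega) (by unfold adjG; omega), Mf_diag, wt_big (by omega)]
        rw [Bf_big (show 3 ≤ n + 1 by omega), Bf_big (show 3 ≤ n + 2 by omega)]
        split_ifs <;> push_cast <;> omega

lemma MG_apply (n : ℕ) (i k : Fin (n + 3)) : MG n i k = Mf i.val k.val := by
  simp [MG, Mf, Fin.ext_iff]

lemma MG_mul_BM (n : ℕ) (hn : 1 ≤ n) : MG n * BM n = 1 := by
  ext i j
  rw [Matrix.mul_apply, Matrix.one_apply]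
  calc ∑ k, MG n i k * BM n k j
      = ∑ k : Fin (n+3), Mf i.val k.val * Bf n k.val j.val := by
        refine Finset.sum_congr rfl fun k _ => ?_
        rw [MG_apply]; rfl
    _ = ∑ k ∈ Finset.range (n+3), Mf i.val k * Bf n k j.val :=
        Fin.sum_univ_eq_sum_range (fun k => Mf i.val k * Bf n k j.val) (n+3)
    _ = if i.val = j.val then 1 else 0 := key n hn i.val j.val i.isLt j.isLt
    _ = if i = j then 1 else 0 := by simp [Fin.ext_iff]

/-- ℕ-indexed version of `Kv`. -/
def Kf (j m : ℕ) : ℤ :=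
  if m = 0 then 1 else if m = 1 then 0 else if m = 2 then -1
  else if m = 3 then (if j = 2 then -3 else -5)
  else if 3 ≤ j ∧ m = j + 1 then 2 else 0

lemma Kf_zero {j m : ℕ} (h0 : m ≠ 0) (h2 : m ≠ 2) (h3 : m ≠ 3) (hp : m ≠ j + 1) :
    Kf j m = 0 := by
  unfold Kf; split_ifs <;> omega

lemma final_small (n j : ℕ) (hn : 1 ≤ n) (hj1 : 1 ≤ j) (hj2 : j ≤ 2) :
    ∑ m ∈ Finset.range (n+3), Kf j m * ∑ k ∈ Finset.range (n+3), Bf n m k * Kf j k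
      = -((n:ℤ)+3) := by
  have hg : ∀ m : ℕ, ∑ k ∈ Finset.range (n+3), Bf n m k * Kf j k
      = Bf n m 0 * Kf j 0 + Bf n m 2 * Kf j 2 + Bf n m 3 * Kf j 3 := by
    intro m
    rw [← Finset.sum_subset
        (show insert 0 (insert 2 ({3} : Finset ℕ)) ⊆ Finset.range (n+3) by
          intro k hk; simp only [Finset.mem_insert, Finset.mem_singleton] at hk
          simp only [Finset.mem_range]; omega)
        (fun k hk hks => by
          simp only [Finset.mem_insert, Finset.mem_singleton] at hks
          rw [Kf_zero (by omega) (by omega) (by omega) (by omega), mul_zero])]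
    rw [Finset.sum_insert (by simp), Finset.sum_insert (by simp), Finset.sum_singleton]
    ring
  rw [← Finset.sum_subset
      (show insert 0 (insert 2 ({3} : Finset ℕ)) ⊆ Finset.range (n+3) by
        intro k hk; simp only [Finset.mem_insert, Finset.mem_singleton] at hk
        simp only [Finset.mem_range]; omega)
      (fun k hk hks => by
        simp only [Finset.mem_insert, Finset.mem_singleton] at hks
        rw [Kf_zero (by omega) (by omega) (by omega) (by omega), zero_mul])]
  rw [Finset.sum_insert (by simp), Finset.sum_insert (by simp), Finset.sum_singleton]
  rw [hg, hg, hg]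
  simp [Kf, Bf]
  split_ifs <;> push_cast <;> omega

lemma final_big (n j : ℕ) (hj1 : 3 ≤ j) (hj2 : j ≤ n + 1) :
    ∑ m ∈ Finset.range (n+3), Kf j m * ∑ k ∈ Finset.range (n+3), Bf n m k * Kf j k
      = -((n:ℤ)+3) := by
  have hsub : insert 0 (insert 2 (insert 3 ({j+1} : Finset ℕ))) ⊆ Finset.range (n+3) := by
    intro k hk; simp only [Finset.mem_insert, Finset.mem_singleton] at hk
    simp only [Finset.mem_range]; omega
  have hg : ∀ m : ℕ, ∑ k ∈ Finset.range (n+3), Bf n m k * Kf j k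
      = Bf n m 0 * Kf j 0 + Bf n m 2 * Kf j 2 + Bf n m 3 * Kf j 3
        + Bf n m (j+1) * Kf j (j+1) := by
    intro m
    rw [← Finset.sum_subset hsub
        (fun k hk hks => by
          simp only [Finset.mem_insert, Finset.mem_singleton] at hks
          rw [Kf_zero (by omega) (by omega) (by omega) (by omega), mul_zero])]
    rw [Finset.sum_insert (by simp only [Finset.mem_insert, Finset.mem_singleton]; omega),
      Finset.sum_insert (by simp only [Finset.mem_insert, Finset.mem_singleton]; omega),
      Finset.sum_insert (by simp only [Finset.mem_singleton]; omega), Finset.sum_singleton]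
    ring
  rw [← Finset.sum_subset hsub
      (fun k hk hks => by
        simp only [Finset.mem_insert, Finset.mem_singleton] at hks
        rw [Kf_zero (by omega) (by omega) (by omega) (by omega), zero_mul])]
  rw [Finset.sum_insert (by simp only [Finset.mem_insert, Finset.mem_singleton]; omega),
    Finset.sum_insert (by simp only [Finset.mem_insert, Finset.mem_singleton]; omega),
    Finset.sum_insert (by simp only [Finset.mem_singleton]; omega), Finset.sum_singleton]
  rw [hg, hg, hg, hg]
  simp [Kf, Bf]
  split_ifs <;> push_cast <;> omega

/-- each `K_j` has `K_j·K_j + (n+3) = 0`, where the self-intersection is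
computed via the inverse of the intersection matrix; i.e. the renormalized length
`(K_j·K_j + |G_n|)/4` is `0`. -/
theorem Kv_square (n j : ℕ) (hn : 1 ≤ n) (hj1 : 1 ≤ j) (hj2 : j ≤ n + 1) :
    dotProduct (Kv n j) ((MG n)⁻¹.mulVec (Kv n j)) + (n + 3) = 0 := by
  have hinv : (MG n)⁻¹ = BM n := Matrix.inv_eq_right_inv (MG_mul_BM n hn)
  rw [hinv]
  have h1 : dotProduct (Kv n j) ((BM n).mulVec (Kv n j))
      = ∑ m ∈ Finset.range (n+3), Kf j m * ∑ k ∈ Finset.range (n+3), Bf n m k * Kf j k := by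
    rw [← Fin.sum_univ_eq_sum_range
      (fun m => Kf j m * ∑ k ∈ Finset.range (n+3), Bf n m k * Kf j k) (n+3)]
    refine Finset.sum_congr rfl fun i _ => ?_
    rw [← Fin.sum_univ_eq_sum_range (fun k => Bf n i.val k * Kf j k) (n+3)]
    rfl
  rw [h1]
  rcases Nat.lt_or_ge j 3 with hj3 | hj3
  · rw [final_small n j hn hj1 (by omega)]; ring
  · rw [final_big n j hj3 hj2]; ring
end

section
/- For every n ≥ 1, the sequence of moves at vertices (in the indexing v_0 = vertex 1, etc.) 1, 2, 1, 3, 1, 2, 1 applied to K_1 = (1,0,-1,-5,0,...,0) (and likewise to K_2 = (1,0,-1,-3,0,...,0)) is a legal sequence of moves (each move at v requires K·v + v·v = 0), and the final vector K' satisfies v·v + 2 ≤ -K'·v ≤ -v·v for all vertices v; i.e., this is a good full path. -/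
lemma vval1 (n : ℕ) : ((1 : Fin (n+3)) : ℕ) = 1 := by
  show 1 % (n+3) = 1
  exact Nat.mod_eq_of_lt (by omega)

lemma vval2 (n : ℕ) : ((2 : Fin (n+3)) : ℕ) = 2 := by
  show 2 % (n+3) = 2
  exact Nat.mod_eq_of_lt (by omega)

lemma MG0 (n : ℕ) (v : Fin (n+3)) :
    MG n 0 v = if v.val = 0 then -1 else if v.val ≤ 3 then 1 else 0 := by
  rcases v with ⟨k, hk⟩
  simp only [MG, adjG, wt, Fin.ext_iff, Fin.val_zero]
  split_ifs <;> (first | rfl | (simp -failIfUnchanged only [true_and, false_and, and_false, false_or, or_false, or_true, and_true, true_or, le_zero_iff, not_or, not_and] at *; try omega))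

lemma MG1 (n : ℕ) (v : Fin (n+3)) :
    MG n 1 v = if v.val = 1 then -2 else if v.val = 0 then 1 else 0 := by
  rcases v with ⟨k, hk⟩
  simp only [MG, adjG, wt, Fin.ext_iff, vval1]
  split_ifs <;> (first | rfl | (simp -failIfUnchanged only [true_and, false_and, and_false, false_or, or_false, or_true, and_true, true_or, le_zero_iff, not_or, not_and] at *; try omega))

lemma MG2 (n : ℕ) (v : Fin (n+3)) :
    MG n 2 v = if v.val = 2 then -3 else if v.val = 0 then 1 else 0 := by
  rcases v with ⟨k, hk⟩
  simp only [MG, adjG, wt, Fin.ext_iff, vval2]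
  split_ifs <;> (first | rfl | (simp -failIfUnchanged only [true_and, false_and, and_false, false_or, or_false, or_true, and_true, true_or, le_zero_iff, not_or, not_and] at *; try omega))

lemma pathEnd_formula (n j : ℕ) (v : Fin (n+3)) :
    pathEnd (MG n) (Kv n j) ([0, 1, 0, 2, 0, 1, 0] : List (Fin (n + 3))) v =
      Kv n j v + 8 * MG n 0 v + 4 * MG n 1 v + 2 * MG n 2 v := by
  simp only [pathEnd, List.foldl, applyMove]
  ring

/-- for every `n ≥ 1`, the moves at vertices `1,2,1,3,1,2,1` (1-indexed;
here 0-indexed) applied to `K_1` and to `K_2` are legal, and the final vector `K'`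
satisfies `v·v + 2 ≤ -K'·v ≤ -v·v` for all `v`: a good full path. -/
theorem K1_K2_goodFullPath (n : ℕ) (hn : 1 ≤ n) (j : ℕ) (hj : j = 1 ∨ j = 2) :
    PathLegal (MG n) (Kv n j) ([0, 1, 0, 2, 0, 1, 0] : List (Fin (n + 3))) ∧
      InBounds (MG n)
        (fun v => -(pathEnd (MG n) (Kv n j) ([0, 1, 0, 2, 0, 1, 0] : List (Fin (n + 3))) v)) := by
  constructor
  · simp only [PathLegal, applyMove, MG0, MG1, MG2, Kv, Fin.val_zero, vval1, vval2]
    norm_num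
  · intro v
    simp only [pathEnd_formula, MG0, MG1, MG2, Kv]
    have hvv : MG n v v = wt v.val := by simp [MG]
    rw [hvv]
    unfold wt
    rcases hj with hj | hj <;> subst hj <;> split_ifs <;> omega
end

section
/- For every n ≥ 1 and every 3 ≤ j ≤ n+1, the move sequence starting with 1,2,1,3,1,2,1 and continuing with the block (j+2, j+1, ..., 5), (j+3, j+2, ..., 6), ..., (n+3, n+2, ..., n+6-j) applied to K_j = (1,0,-1,-5,0,...,0,2,0,...,0) (with the 2 in position j+1) is a legal sequence of moves, and its final vector K' satisfies v·v + 2 ≤ -K'·v ≤ -v·v for all vertices; i.e., K_j supports a good full path. -/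
/-- The full move sequence for `K_j` (`3 ≤ j ≤ n+1`), 0-indexed vertices: the prefix
`1,2,1,3,1,2,1` followed by the descending blocks `(j+2,…,5), (j+3,…,6), …,
(n+3,…,n+6-j)` (1-indexed values, each block of length `j-2`). -/
def movesKj (n j : ℕ) : List (Fin (n + 3)) :=
  ([0, 1, 0, 2, 0, 1, 0] : List (Fin (n + 3))) ++
    (List.range (n + 2 - j)).flatMap
      (fun t => (List.range (j - 2)).map (fun s => (Fin.ofNat (n + 3) (j + 1 + t - s : ℕ))))

namespace KjAux

def st (j t v i : ℕ) : ℤ :=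
  if i = 0 then -1 else if i = 1 then 0 else if i = 2 then 1
  else if i = 3 then (if t = 0 then 3 else 5)
  else if i = t + 3 then -2
  else if i = v then 2
  else if v < j + 1 + t ∧ i = v + 1 then -2
  else if v < j + 1 + t ∧ i = j + 2 + t then 2
  else 0

theorem pathEnd_nil {V : Type*} (M : Matrix V V ℤ) (K : V → ℤ) : pathEnd M K [] = K := rfl

theorem pathEnd_cons {V : Type*} (M : Matrix V V ℤ) (K : V → ℤ) (v : V) (l : List V) :
    pathEnd M K (v :: l) = pathEnd M (applyMove M K v) l := rfl

theorem pathEnd_append {V : Type*} (M : Matrix V V ℤ) (K : V → ℤ) (l1 l2 : List V) :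
    pathEnd M K (l1 ++ l2) = pathEnd M (pathEnd M K l1) l2 := by
  simp [pathEnd, List.foldl_append]

theorem pathLegal_append {V : Type*} (M : Matrix V V ℤ) :
    ∀ (l1 : List V) (K : V → ℤ) (l2 : List V), PathLegal M K l1 →
      PathLegal M (pathEnd M K l1) l2 → PathLegal M K (l1 ++ l2)
  | [], _, _, _, h2 => h2
  | v :: l1, K, l2, ⟨h, h1⟩, h2 => ⟨h, pathLegal_append M l1 _ l2 h1 h2⟩

theorem pathLegal_single {V : Type*} (M : Matrix V V ℤ) (K : V → ℤ) (v : V)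
    (h : K v + M v v = 0) : PathLegal M K [v] := ⟨h, trivial⟩

theorem MG_row (n v : ℕ) (h4 : 4 ≤ v) (hv : v < n + 3) (i : Fin (n + 3)) :
    MG n ⟨v, hv⟩ i = if i.val = v then -2 else if i.val + 1 = v ∨ i.val = v + 1 then 1 else 0 := by
  have hi := i.isLt
  simp only [MG, adjG, wt, Fin.ext_iff, Fin.val_mk]
  split_ifs <;> first | exact absurd ‹False› id | omega

theorem MG_diag4 (n v : ℕ) (h4 : 4 ≤ v) (hv : v < n + 3) : MG n ⟨v, hv⟩ ⟨v, hv⟩ = -2 := by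
  rw [MG_row n v h4 hv]
  simp only [Fin.val_mk]
  split_ifs <;> first | exact absurd ‹False› id | omega

theorem st_self (j t v : ℕ) (h : t + 4 ≤ v) (h2 : v ≤ j + 1 + t) : st j t v v = 2 := by
  simp only [st]; split_ifs <;> first | exact absurd ‹False› id | omega

theorem move_st_mid (n j t v : ℕ) (hj : 3 ≤ j) (h4 : t + 5 ≤ v) (hv2 : v ≤ j + 1 + t)
    (hvn : v < n + 3) :
    applyMove (MG n) (fun i : Fin (n + 3) => st j t v i.val) ⟨v, hvn⟩ =
      fun i => st j t (v - 1) i.val := by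
  funext i
  have hi := i.isLt
  simp only [applyMove, MG_row n v (by omega) hvn, st, Fin.val_mk]
  split_ifs <;> first | exact absurd ‹False› id | omega

theorem move_st_last (n j t : ℕ) (hj : 3 ≤ j) (hvn : t + 4 < n + 3) :
    applyMove (MG n) (fun i : Fin (n + 3) => st j t (t + 4) i.val) ⟨t + 4, hvn⟩ =
      fun i => st j (t + 1) (j + 2 + t) i.val := by
  funext i
  have hi := i.isLt
  simp only [applyMove, MG_row n (t + 4) (by omega) hvn, st, Fin.val_mk]
  split_ifs <;> first | exact absurd ‹False› id | omega

end KjAux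

namespace KjAux

theorem cast_fin (n m : ℕ) (h : m < n + 3) : (Fin.ofNat (n + 3) (m : ℕ)) = ⟨m, h⟩ := by
  ext; simp [Fin.val_ofNat, Nat.mod_eq_of_lt h]

theorem run (n j t : ℕ) (hj : 3 ≤ j) (hjn : j ≤ n + 1) (ht : t ≤ n + 1 - j) :
    ∀ d, d ≤ j - 3 →
      PathLegal (MG n) (fun i : Fin (n + 3) => st j t (j + 1 + t) i.val)
        ((List.range d).map fun s => (Fin.ofNat (n + 3) (j + 1 + t - s : ℕ))) ∧
      pathEnd (MG n) (fun i : Fin (n + 3) => st j t (j + 1 + t) i.val)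
        ((List.range d).map fun s => (Fin.ofNat (n + 3) (j + 1 + t - s : ℕ))) =
        fun i => st j t (j + 1 + t - d) i.val := by
  intro d
  induction d with
  | zero => intro _; exact ⟨trivial, rfl⟩
  | succ d ih =>
    intro hd
    obtain ⟨ihL, ihE⟩ := ih (by omega)
    have hvlt : j + 1 + t - d < n + 3 := by omega
    have hcast : (Fin.ofNat (n + 3) (j + 1 + t - d : ℕ)) = ⟨j + 1 + t - d, hvlt⟩ :=
      cast_fin n _ hvlt
    have hmove : applyMove (MG n) (fun i : Fin (n + 3) => st j t (j + 1 + t - d) i.val)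
        ⟨j + 1 + t - d, hvlt⟩ = fun i => st j t (j + 1 + t - (d + 1)) i.val := by
      have := move_st_mid n j t (j + 1 + t - d) hj (by omega) (by omega) hvlt
      rw [this]
      have : j + 1 + t - d - 1 = j + 1 + t - (d + 1) := by omega
      rw [this]
    have hlist : (List.range (d + 1)).map (fun s => (Fin.ofNat (n + 3) (j + 1 + t - s : ℕ))) =
        ((List.range d).map fun s => (Fin.ofNat (n + 3) (j + 1 + t - s : ℕ))) ++
          [(Fin.ofNat (n + 3) (j + 1 + t - d : ℕ))] := by
      rw [List.range_succ, List.map_append]; rfl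
    constructor
    · rw [hlist]
      refine pathLegal_append _ _ _ _ ihL ?_
      rw [ihE, hcast]
      refine pathLegal_single _ _ _ ?_
      rw [MG_diag4 n _ (by omega) hvlt]
      have := st_self j t (j + 1 + t - d) (by omega) (by omega)
      simp only [Fin.val_mk, this]
      ring
    · rw [hlist, pathEnd_append, ihE, hcast]
      show applyMove _ _ _ = _
      rw [hmove]

theorem block (n j t : ℕ) (hj : 3 ≤ j) (hjn : j ≤ n + 1) (ht : t ≤ n + 1 - j) :
    PathLegal (MG n) (fun i : Fin (n + 3) => st j t (j + 1 + t) i.val)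
      ((List.range (j - 2)).map fun s => (Fin.ofNat (n + 3) (j + 1 + t - s : ℕ))) ∧
    pathEnd (MG n) (fun i : Fin (n + 3) => st j t (j + 1 + t) i.val)
      ((List.range (j - 2)).map fun s => (Fin.ofNat (n + 3) (j + 1 + t - s : ℕ))) =
      fun i => st j (t + 1) (j + 2 + t) i.val := by
  obtain ⟨rL, rE⟩ := run n j t hj hjn ht (j - 3) le_rfl
  have h4 : j + 1 + t - (j - 3) = t + 4 := by omega
  rw [h4] at rE
  have hvlt : t + 4 < n + 3 := by omega
  have hlist : (List.range (j - 2)).map (fun s => (Fin.ofNat (n + 3) (j + 1 + t - s : ℕ))) =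
      ((List.range (j - 3)).map fun s => (Fin.ofNat (n + 3) (j + 1 + t - s : ℕ))) ++
        [(Fin.ofNat (n + 3) (j + 1 + t - (j - 3) : ℕ))] := by
    have : j - 2 = (j - 3) + 1 := by omega
    rw [this, List.range_succ, List.map_append]; rfl
  have hcast : (Fin.ofNat (n + 3) (j + 1 + t - (j - 3) : ℕ)) = ⟨t + 4, hvlt⟩ := by
    rw [h4]; exact cast_fin n _ hvlt
  constructor
  · rw [hlist]
    refine pathLegal_append _ _ _ _ rL ?_
    rw [rE, hcast]
    refine pathLegal_single _ _ _ ?_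
    rw [MG_diag4 n _ (by omega) hvlt]
    have := st_self j t (t + 4) (by omega) (by omega)
    simp only [Fin.val_mk, this]
    ring
  · rw [hlist, pathEnd_append, rE, hcast]
    show applyMove _ _ _ = _
    rw [move_st_last n j t hj hvlt]

theorem blocks (n j : ℕ) (hj : 3 ≤ j) (hjn : j ≤ n + 1) :
    ∀ N, N ≤ n + 2 - j →
      PathLegal (MG n) (fun i : Fin (n + 3) => st j 0 (j + 1) i.val)
        ((List.range N).flatMap fun t =>
          (List.range (j - 2)).map fun s => (Fin.ofNat (n + 3) (j + 1 + t - s : ℕ))) ∧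
      pathEnd (MG n) (fun i : Fin (n + 3) => st j 0 (j + 1) i.val)
        ((List.range N).flatMap fun t =>
          (List.range (j - 2)).map fun s => (Fin.ofNat (n + 3) (j + 1 + t - s : ℕ))) =
        fun i => st j N (j + 1 + N) i.val := by
  intro N
  induction N with
  | zero =>
    intro _
    constructor
    · exact trivial
    · show (fun i : Fin (n + 3) => st j 0 (j + 1) i.val) = _
      norm_num
  | succ N ih =>
    intro hN
    obtain ⟨ihL, ihE⟩ := ih (by omega)
    obtain ⟨bL, bE⟩ := block n j N hj hjn (by omega)
    have hstep : j + 2 + N = j + 1 + (N + 1) := by omega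
    rw [hstep] at bE
    have hlist : ((List.range (N + 1)).flatMap fun t =>
        (List.range (j - 2)).map fun s => (Fin.ofNat (n + 3) (j + 1 + t - s : ℕ))) =
        ((List.range N).flatMap fun t =>
          (List.range (j - 2)).map fun s => (Fin.ofNat (n + 3) (j + 1 + t - s : ℕ))) ++
        ((List.range (j - 2)).map fun s => (Fin.ofNat (n + 3) (j + 1 + N - s : ℕ))) := by
      rw [List.range_succ, List.flatMap_append]; simp
    rw [hlist]
    constructor
    · refine pathLegal_append _ _ _ _ ihL ?_
      rw [ihE]; exact bL
    · rw [pathEnd_append, ihE, bE]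

end KjAux

namespace KjAux

def preA : ℕ → ℤ × ℤ × ℤ × ℤ
  | 0 => (1, 0, -1, -5)
  | 1 => (-1, 2, 1, -3)
  | 2 => (1, -2, 1, -3)
  | 3 => (-1, 0, 3, -1)
  | 4 => (1, 0, -3, -1)
  | 5 => (-1, 2, -1, 1)
  | 6 => (1, -2, -1, 1)
  | _ => (-1, 0, 1, 3)

def pre (k j i : ℕ) : ℤ :=
  if i = 0 then (preA k).1 else if i = 1 then (preA k).2.1 else if i = 2 then (preA k).2.2.1
  else if i = 3 then (preA k).2.2.2 else if i = j + 1 then 2 else 0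

theorem MG_row0 (n : ℕ) (i : Fin (n + 3)) :
    MG n ⟨0, by omega⟩ i = if i.val = 0 then -1 else if i.val ≤ 3 then 1 else 0 := by
  have hi := i.isLt
  simp only [MG, adjG, wt, Fin.ext_iff, Fin.val_mk]
  split_ifs <;> first | exact absurd ‹False› id | omega | (simp_all; omega) | simp_all

theorem MG_row1 (n : ℕ) (i : Fin (n + 3)) :
    MG n ⟨1, by omega⟩ i = if i.val = 1 then -2 else if i.val = 0 then 1 else 0 := by
  have hi := i.isLt
  simp only [MG, adjG, wt, Fin.ext_iff, Fin.val_mk]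
  split_ifs <;> first | exact absurd ‹False› id | omega | (simp_all; omega) | simp_all

theorem MG_row2 (n : ℕ) (i : Fin (n + 3)) :
    MG n ⟨2, by omega⟩ i = if i.val = 2 then -3 else if i.val = 0 then 1 else 0 := by
  have hi := i.isLt
  simp only [MG, adjG, wt, Fin.ext_iff, Fin.val_mk]
  split_ifs <;> first | exact absurd ‹False› id | omega | (simp_all; omega) | simp_all

theorem Kv_eq_pre (n j : ℕ) (hj : 3 ≤ j) (hjn : j ≤ n + 1) :
    Kv n j = fun i : Fin (n + 3) => pre 0 j i.val := by
  funext i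
  have hi := i.isLt
  simp only [Kv, pre, preA]
  split_ifs <;> first | exact absurd ‹False› id | rfl | omega

theorem step0 (n j k : ℕ) (hj : 3 ≤ j) (hk : k ≤ 6) (hk2 : k % 2 = 0) :
    applyMove (MG n) (fun i : Fin (n + 3) => pre k j i.val) ⟨0, by omega⟩ =
      fun i => pre (k + 1) j i.val := by
  funext i
  have hi := i.isLt
  simp only [applyMove, MG_row0, pre]
  interval_cases k <;>
    simp only [preA] <;> split_ifs <;> first | exact absurd ‹False› id | omega | (simp_all; omega) | simp_all

theorem step1' (n j k : ℕ) (hj : 3 ≤ j) (hk : k = 1 ∨ k = 5) :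
    applyMove (MG n) (fun i : Fin (n + 3) => pre k j i.val) ⟨1, by omega⟩ =
      fun i => pre (k + 1) j i.val := by
  funext i
  have hi := i.isLt
  simp only [applyMove, MG_row1, pre]
  rcases hk with h | h <;> subst h <;>
    simp only [preA] <;> split_ifs <;> first | exact absurd ‹False› id | omega | (simp_all; omega) | simp_all

theorem step2' (n j : ℕ) (hj : 3 ≤ j) :
    applyMove (MG n) (fun i : Fin (n + 3) => pre 3 j i.val) ⟨2, by omega⟩ =
      fun i => pre 4 j i.val := by
  funext i
  have hi := i.isLt
  simp only [applyMove, MG_row2, pre, preA]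
  split_ifs <;> first | exact absurd ‹False› id | omega | (simp_all; omega) | simp_all

theorem pre7_eq_st (n j : ℕ) (hj : 3 ≤ j) :
    (fun i : Fin (n + 3) => pre 7 j i.val) = fun i => st j 0 (j + 1) i.val := by
  funext i
  have hi := i.isLt
  simp only [pre, preA, st]
  split_ifs <;> first | exact absurd ‹False› id | omega | (simp_all; omega) | simp_all

end KjAux

namespace KjAux

theorem fin0 (n : ℕ) : (0 : Fin (n + 3)) = ⟨0, by omega⟩ := rfl

theorem fin1 (n : ℕ) : (1 : Fin (n + 3)) = ⟨1, by omega⟩ := by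
  ext; simp [Fin.val_one]

theorem fin2 (n : ℕ) : (2 : Fin (n + 3)) = ⟨2, by omega⟩ := by
  ext; simp [Fin.val_two]

theorem seq {V : Type*} (M : Matrix V V ℤ) (K K' : V → ℤ) (v : V) (l : List V)
    (h1 : K v + M v v = 0) (h2 : applyMove M K v = K') (h3 : PathLegal M K' l) :
    PathLegal M K (v :: l) := ⟨h1, h2 ▸ h3⟩

theorem diag0 (n : ℕ) : MG n ⟨0, by omega⟩ ⟨0, by omega⟩ = -1 := by
  rw [MG_row0]; simp

theorem diag1 (n : ℕ) : MG n ⟨1, by omega⟩ ⟨1, by omega⟩ = -2 := by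
  rw [MG_row1]; simp

theorem diag2 (n : ℕ) : MG n ⟨2, by omega⟩ ⟨2, by omega⟩ = -3 := by
  rw [MG_row2]; simp

theorem pre_val (k j i : ℕ) : pre k j i = pre k j i := rfl

theorem prefix_ok (n j : ℕ) (hj : 3 ≤ j) (hjn : j ≤ n + 1) :
    PathLegal (MG n) (Kv n j) ([0, 1, 0, 2, 0, 1, 0] : List (Fin (n + 3))) ∧
    pathEnd (MG n) (Kv n j) ([0, 1, 0, 2, 0, 1, 0] : List (Fin (n + 3))) =
      fun i => st j 0 (j + 1) i.val := by
  have e0 := step0 n j 0 hj (by norm_num) (by norm_num)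
  have e1 := step1' n j 1 hj (Or.inl rfl)
  have e2 := step0 n j 2 hj (by norm_num) (by norm_num)
  have e3 := step2' n j hj
  have e4 := step0 n j 4 hj (by norm_num) (by norm_num)
  have e5 := step1' n j 5 hj (Or.inr rfl)
  have e6 := step0 n j 6 hj (by norm_num) (by norm_num)
  have hK := Kv_eq_pre n j hj hjn
  have leg : ∀ k, pre k j 0 + MG n ⟨0, by omega⟩ ⟨0, by omega⟩ = pre k j 0 + -1 := by
    intro k; rw [diag0]
  constructor
  · rw [hK]
    simp only [fin0 n, fin1 n, fin2 n]
    refine seq _ _ _ _ _ ?_ e0 (seq _ _ _ _ _ ?_ e1 (seq _ _ _ _ _ ?_ e2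
      (seq _ _ _ _ _ ?_ e3 (seq _ _ _ _ _ ?_ e4 (seq _ _ _ _ _ ?_ e5
      (seq _ _ _ _ _ ?_ e6 trivial))))))
    · rw [diag0]; simp [pre, preA]
    · rw [diag1]; simp [pre, preA]
    · rw [diag0]; simp [pre, preA]
    · rw [diag2]; simp [pre, preA]
    · rw [diag0]; simp [pre, preA]
    · rw [diag1]; simp [pre, preA]
    · rw [diag0]; simp [pre, preA]
  · rw [hK]
    simp only [fin0 n, fin1 n, fin2 n]
    rw [pathEnd_cons, e0, pathEnd_cons, e1, pathEnd_cons, e2, pathEnd_cons, e3,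
      pathEnd_cons, e4, pathEnd_cons, e5, pathEnd_cons, e6, pathEnd_nil]
    exact pre7_eq_st n j hj

end KjAux

/-- for every `n ≥ 1` and `3 ≤ j ≤ n+1`, the above move sequence applied
to `K_j` is legal and its final vector `K'` satisfies `v·v + 2 ≤ -K'·v ≤ -v·v`
for all vertices: `K_j` supports a good full path. -/
theorem Kj_goodFullPath (n j : ℕ) (hn : 1 ≤ n) (hj1 : 3 ≤ j) (hj2 : j ≤ n + 1) :
    PathLegal (MG n) (Kv n j) (movesKj n j) ∧
      InBounds (MG n) (fun v => -(pathEnd (MG n) (Kv n j) (movesKj n j) v)) := by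
  obtain ⟨pL, pE⟩ := KjAux.prefix_ok n j hj1 hj2
  obtain ⟨bL, bE⟩ := KjAux.blocks n j hj1 hj2 (n + 2 - j) le_rfl
  have hE : pathEnd (MG n) (Kv n j) (movesKj n j) =
      fun i : Fin (n + 3) => KjAux.st j (n + 2 - j) (n + 3) i.val := by
    rw [movesKj, KjAux.pathEnd_append, pE, bE]
    have : j + 1 + (n + 2 - j) = n + 3 := by omega
    rw [this]
  constructor
  · rw [movesKj]
    refine KjAux.pathLegal_append _ _ _ _ pL ?_
    rw [pE]
    exact bL
  · intro v
    have hv := v.isLt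
    have hdiag : MG n v v = wt v.val := by simp [MG]
    rw [hE, hdiag]
    simp only [wt, KjAux.st]
    split_ifs <;> first | exact absurd ‹False› id | omega
end

section
/- In the equivalence relation on Z^{≥0} × Char(G_n) generated by (m, K) ~ (m+n', K + 2PD[v]) whenever K·v + v·v = 2n' and min(m, m+n') ≥ 0, one has (1, K_1) ~ (0, L) where L = (-3, 2, 5, 1, 0, ..., 0); concretely, the vertex sequence 1,1,2,1 applied to K_1 = (1,0,-1,-5,0,...,0) realizes this equivalence with the running U-exponent staying in {0,1}. -/
/-- The vector `L = (-3, 2, 5, 1, 0, …, 0)` on `G_n`. -/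
def Lv (n : ℕ) : Fin (n + 3) → ℤ := fun i =>
  if i.val = 0 then -3 else if i.val = 1 then 2 else if i.val = 2 then 5
  else if i.val = 3 then 1 else 0

/-- One step of the generating relation of `K⁺(G)` on `ℤ≥0 × Char(G)`:
`(m, K) ~ (m + n', K + 2PD[v])` whenever `K·v + v·v = 2n'` and `min(m, m+n') ≥ 0`. -/
def StepK {V : Type*} (M : Matrix V V ℤ) (p q : ℤ × (V → ℤ)) : Prop :=
  ∃ v : V, q.2 = applyMove M p.2 v ∧ p.2 v + M v v = 2 * (q.1 - p.1) ∧ 0 ≤ p.1 ∧ 0 ≤ q.1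

/-- Performing the move at vertex `v`, updating the running `U`-exponent. -/
def stepAt {V : Type*} (M : Matrix V V ℤ) (p : ℤ × (V → ℤ)) (v : V) : ℤ × (V → ℤ) :=
  (p.1 + (p.2 v + M v v) / 2, applyMove M p.2 v)

/-! The moves at `v₀, v₀, v₁, v₀` add `2 (3 PD[v₀] + PD[v₁]) = 2 (-2, 1, 3, 3, 0, …, 0)` to
`K₁ = (1, 0, -1, -5, 0, …, 0)`, which gives `L`. The quantities `K·v + v·v` met along the way
are `0, -2, 2, -2`, so the exponent runs through `1, 1, 0, 1, 0`. -/

theorem pathEnd_apply {V : Type*} (M : Matrix V V ℤ) (K : V → ℤ) (l : List V) (i : V) :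
    pathEnd M K l i = K i + 2 * (l.map (M · i)).sum := by
  induction l generalizing K with
  | nil => simp [pathEnd]
  | cons v l ih =>
    simp only [pathEnd, List.foldl_cons] at ih ⊢
    rw [ih, applyMove, List.map_cons, List.sum_cons]
    ring

section PlumbingGraph

variable (n : ℕ)

theorem MG_zero_apply (i : Fin (n + 3)) :
    MG n 0 i = if i.val = 0 then -1 else if i.val ≤ 3 then 1 else 0 := by
  simp only [MG, adjG, wt, Fin.ext_iff, Fin.val_zero]
  grind

theorem MG_one_apply (i : Fin (n + 3)) :
    MG n 1 i = if i.val = 0 then 1 else if i.val = 1 then -2 else 0 := by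
  simp only [MG, adjG, wt, Fin.ext_iff, Fin.val_one]
  grind

theorem pathEnd_Kv_one : pathEnd (MG n) (Kv n 1) [0, 0, 1, 0] = Lv n := by
  funext i
  simp only [pathEnd_apply, List.map_cons, List.map_nil, List.sum_cons, List.sum_nil,
    MG_zero_apply, MG_one_apply, Kv, Lv]
  split_ifs <;> omega

theorem pairings_along_Kv_one :
    Kv n 1 0 + MG n 0 0 = 0 ∧ pathEnd (MG n) (Kv n 1) [0] 0 + MG n 0 0 = -2 ∧
      pathEnd (MG n) (Kv n 1) [0, 0] 1 + MG n 1 1 = 2 ∧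
      pathEnd (MG n) (Kv n 1) [0, 0, 1] 0 + MG n 0 0 = -2 := by
  simp [pathEnd_apply, MG_zero_apply, MG_one_apply, Kv]

theorem scanl_stepAt_Kv_one :
    List.scanl (stepAt (MG n)) (1, Kv n 1) ([0, 0, 1, 0] : List (Fin (n + 3))) =
      [(1, Kv n 1), (1, pathEnd (MG n) (Kv n 1) [0]), (0, pathEnd (MG n) (Kv n 1) [0, 0]),
        (1, pathEnd (MG n) (Kv n 1) [0, 0, 1]), (0, Lv n)] := by
  obtain ⟨h₁, h₂, h₃, h₄⟩ := pairings_along_Kv_one n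
  simp only [pathEnd, List.foldl_cons, List.foldl_nil] at h₂ h₃ h₄
  rw [← pathEnd_Kv_one]
  simp only [List.scanl_cons, List.scanl_nil, stepAt, pathEnd, List.foldl_cons, List.foldl_nil,
    h₁, h₂, h₃, h₄]
  norm_num

end PlumbingGraph

theorem U_K1_equiv_L_general (n : ℕ) :
    List.Chain' (StepK (MG n))
        (List.scanl (stepAt (MG n)) (1, Kv n 1) ([0, 0, 1, 0] : List (Fin (n + 3)))) ∧
      (List.scanl (stepAt (MG n)) (1, Kv n 1)
          ([0, 0, 1, 0] : List (Fin (n + 3)))).getLast? = some (0, Lv n) ∧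
      ∀ p ∈ List.scanl (stepAt (MG n)) (1, Kv n 1) ([0, 0, 1, 0] : List (Fin (n + 3))),
        p.1 = 0 ∨ p.1 = 1 := by
  obtain ⟨h₁, h₂, h₃, h₄⟩ := pairings_along_Kv_one n
  rw [scanl_stepAt_Kv_one]
  refine ⟨?_, rfl, by simp⟩
  exact .cons_cons ⟨0, rfl, h₁.trans (by norm_num), zero_le_one, zero_le_one⟩ <|
    .cons_cons ⟨0, rfl, h₂.trans (by norm_num), zero_le_one, le_rfl⟩ <|
    .cons_cons ⟨1, rfl, h₃.trans (by norm_num), le_rfl, zero_le_one⟩ <|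
    .cons_cons ⟨0, (pathEnd_Kv_one n).symm, h₄.trans (by norm_num), zero_le_one, le_rfl⟩ <|
    .singleton _

/-- `(1, K_1) ~ (0, L)` in `K⁺(G_n)`, realized concretely by the vertex
sequence `1,1,2,1` (1-indexed; here 0-indexed), with the running `U`-exponent
staying in `{0,1}` throughout. -/
theorem U_K1_equiv_L (n : ℕ) (hn : 1 ≤ n) :
    List.Chain' (StepK (MG n))
        (List.scanl (stepAt (MG n)) (1, Kv n 1) ([0, 0, 1, 0] : List (Fin (n + 3)))) ∧
      (List.scanl (stepAt (MG n)) (1, Kv n 1)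
          ([0, 0, 1, 0] : List (Fin (n + 3)))).getLast? = some (0, Lv n) ∧
      ∀ p ∈ List.scanl (stepAt (MG n)) (1, Kv n 1) ([0, 0, 1, 0] : List (Fin (n + 3))),
        p.1 = 0 ∨ p.1 = 1 :=
  U_K1_equiv_L_general n
end

section
/- Let K be a characteristic vector on the linear graph A_s (all weights -2) with entries K·v_i ∈ {0,2}, and suppose K·v_i = 2 = K·v_j for some i < j with K·v_l = 0 for all i < l < j. Then K is equivalent, via moves adding 2PD[v] at vertices where K·v = 2, to a vector whose pairing sequence has entries -2 and 2 (or contains consecutive entries 2, 2), matching the chain of equivalences (*,2,0,...,0,2,*') ~ (*'',-2,2,0,...,0,2,*') ~ ... ~ (*'',-2,0,...,-2,2,2,*'). -/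
/-- Intersection matrix of the linear graph `A_s` with all weights `-2`. -/
def MA (s : ℕ) : Matrix (Fin s) (Fin s) ℤ :=
  fun i j => if i = j then -2 else if i.val + 1 = j.val ∨ j.val + 1 = i.val then 1 else 0

/-- on `A_s`, if `K` has entries in `{0,2}` with `K·v_i = 2 = K·v_j` for
some `i < j` and zeros in between, then `K` is equivalent via moves at vertices with
`K·v = 2` to a vector whose pairing sequence contains two consecutive entries `2, 2`. -/
theorem As_propagate (s : ℕ) (K : Fin s → ℤ) (hK : ∀ i, K i = 0 ∨ K i = 2)
    (i j : Fin s) (hij : i < j) (hi : K i = 2) (hj : K j = 2)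
    (hmid : ∀ l : Fin s, i < l → l < j → K l = 0) :
    ∃ l : List (Fin s), PathLegal (MA s) K l ∧
      ∃ t : ℕ, ∃ ht : t + 1 < s,
        pathEnd (MA s) K l ⟨t, Nat.lt_of_succ_lt ht⟩ = 2 ∧
        pathEnd (MA s) K l ⟨t + 1, ht⟩ = 2 := by
  obtain ⟨d, hd⟩ : ∃ d : ℕ, j.val = i.val + d + 1 := ⟨j.val - i.val - 1, by omega⟩
  clear hK hij
  induction d generalizing K i with
  | zero =>
      refine ⟨[], trivial, i.val, by omega, ?_, ?_⟩
      · show K ⟨i.val, _⟩ = 2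
        rwa [show (⟨i.val, _⟩ : Fin s) = i from rfl]
      · show K ⟨i.val + 1, _⟩ = 2
        rwa [show (⟨i.val + 1, _⟩ : Fin s) = j from Fin.ext (by simp only [Fin.val_mk]; omega)]
  | succ d ih =>
      have hi' : i.val + 1 < s := by omega
      set i' : Fin s := ⟨i.val + 1, hi'⟩ with hi'def
      set K' : Fin s → ℤ := applyMove (MA s) K i with hK'def
      have hMA : ∀ a b : Fin s, MA s a b =
          if a = b then -2 else if a.val + 1 = b.val ∨ b.val + 1 = a.val then 1 else 0 :=
        fun a b => rfl
      have hK'i' : K' i' = 2 := by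
        have h0 : K i' = 0 := hmid i' (by rw [Fin.lt_def]; show i.val < i.val + 1; omega) (by rw [Fin.lt_def]; show i.val + 1 < j.val; omega)
        simp only [hK'def, applyMove, hMA, h0, Fin.ext_iff]
        rw [if_neg (by simp [hi'def]), if_pos (by simp [hi'def])]
        ring
      have hK'j : K' j = 2 := by
        simp only [hK'def, applyMove, hMA, hj, Fin.ext_iff]
        rw [if_neg (by omega), if_neg (by omega)]
        ring
      have hK'mid : ∀ l : Fin s, i' < l → l < j → K' l = 0 := by
        intro l h1 h2
        have h0 : K l = 0 := hmid l (by simp only [Fin.lt_def] at *; have : (i' : ℕ) = i.val + 1 := rfl; omega) h2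
        simp only [hK'def, applyMove, hMA, h0, Fin.ext_iff]
        simp only [Fin.lt_def] at h1 h2
        rw [if_neg (by have : (i' : ℕ) = i.val + 1 := rfl; omega), if_neg (by have : (i' : ℕ) = i.val + 1 := rfl; omega)]
        ring
      have hji' : (j : ℕ) = (i' : ℕ) + d + 1 := by
        rw [show (i' : ℕ) = i.val + 1 from rfl]; omega
      obtain ⟨l, hl, t, ht, h1, h2⟩ := ih K' i' hK'i' hK'j hK'mid hji'
      refine ⟨i :: l, ⟨?_, hl⟩, t, ht, h1, h2⟩
      rw [hMA, if_pos rfl, hi]; norm_num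
end

section
/- For the graph G_n, the number of characteristic vectors K satisfying v·v + 2 ≤ K·v ≤ -v·v for all vertices v is exactly 1 · 2 · 3 · 7 · 2^{n-1} = 42 · 2^{n-1}, and among these, exactly n+1 support good full paths (namely K_1, ..., K_{n+1}). -/
-- ===== machinery =====
section Machinery
variable {V : Type*} (M : Matrix V V ℤ)

lemma pathEnd_nil (K : V → ℤ) : pathEnd M K [] = K := rfl
lemma pathEnd_cons (K : V → ℤ) (v : V) (l : List V) :
    pathEnd M K (v :: l) = pathEnd M (applyMove M K v) l := rfl
lemma pathEnd_append (K : V → ℤ) (a b : List V) :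
    pathEnd M K (a ++ b) = pathEnd M (pathEnd M K a) b := List.foldl_append ..

lemma pathLegal_append {K : V → ℤ} {a b : List V} (ha : PathLegal M K a)
    (hb : PathLegal M (pathEnd M K a) b) : PathLegal M K (a ++ b) := by
  induction a generalizing K with
  | nil => exact hb
  | cons v t ih => exact ⟨ha.1, ih ha.2 hb⟩

lemma applyMove_swap (K : V → ℤ) (u v : V) :
    applyMove M (applyMove M K u) v = applyMove M (applyMove M K v) u := by
  funext i; simp [applyMove]; ring

lemma persist (hM : ∀ v i, v ≠ i → 0 ≤ M v i) {K : V → ℤ} {l : List V}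
    (hl : PathLegal M K l) {u : V} (hu : K u + M u u > 0) :
    pathEnd M K l u + M u u > 0 := by
  induction l generalizing K with
  | nil => exact hu
  | cons v t ih =>
    rcases hl with ⟨h1, h2⟩
    rw [pathEnd_cons]
    refine ih h2 ?_
    rcases eq_or_ne v u with rfl | hne
    · omega
    · have := hM v u hne
      simp only [applyMove]
      omega

lemma not_good_of_pos (hM : ∀ v i, v ≠ i → 0 ≤ M v i) {K : V → ℤ} {u : V}
    (hu : K u + M u u > 0) : ¬ HasGoodPath M K := by
  rintro ⟨l, hl, hb⟩
  have h1 := persist M hM hl hu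
  have h2 := (hb u).1
  simp only at h2
  omega

lemma good_step (hsymm : ∀ i j, M i j = M j i) (hM : ∀ v i, v ≠ i → 0 ≤ M v i)
    {K : V → ℤ} {v : V} (hv : K v + M v v = 0) (hg : HasGoodPath M K) :
    HasGoodPath M (applyMove M K v) := by
  obtain ⟨l, hl, hb⟩ := hg
  induction l generalizing K v with
  | nil =>
    exfalso
    have := (hb v).1
    simp only [pathEnd_nil] at this
    omega
  | cons u t ih =>
    rcases hl with ⟨h1, h2⟩
    rw [pathEnd_cons] at hb
    rcases eq_or_ne u v with rfl | hne
    · exact ⟨t, h2, hb⟩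
    · have hMuv : M u v = 0 := by
        by_contra h
        have h0 : 0 ≤ M u v := hM u v hne
        have hpos : (applyMove M K u) v + M v v > 0 := by
          simp only [applyMove]; omega
        have := persist M hM h2 hpos
        have := (hb v).1
        simp only at this
        omega
      have hv' : (applyMove M K u) v + M v v = 0 := by
        simp only [applyMove]; omega
      obtain ⟨m, hm, hgm⟩ := ih hv' h2 hb
      refine ⟨u :: m, ⟨?_, ?_⟩, ?_⟩
      · simp only [applyMove]
        have : M v u = 0 := by rw [hsymm]; exact hMuv
        omega
      · rw [applyMove_swap]; exact hm
      · rw [pathEnd_cons, applyMove_swap]; exact hgm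

lemma good_along (hsymm : ∀ i j, M i j = M j i) (hM : ∀ v i, v ≠ i → 0 ≤ M v i)
    {K : V → ℤ} {m : List V} (hm : PathLegal M K m) (hg : HasGoodPath M K) :
    HasGoodPath M (pathEnd M K m) := by
  induction m generalizing K with
  | nil => exact hg
  | cons v t ih =>
    rcases hm with ⟨h1, h2⟩
    rw [pathEnd_cons]
    exact ih h2 (good_step M hsymm hM h1 hg)

lemma not_good_of_bad (hsymm : ∀ i j, M i j = M j i) (hM : ∀ v i, v ≠ i → 0 ≤ M v i)
    {K : V → ℤ} {l : List V} (hl : BadFullPath M K l) : ¬ HasGoodPath M K := by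
  intro hg
  obtain ⟨hleg, u, hu⟩ := hl
  exact not_good_of_pos M hM hu (good_along M hsymm hM hleg hg)

lemma not_good_step (hsymm : ∀ i j, M i j = M j i) (hM : ∀ v i, v ≠ i → 0 ≤ M v i)
    {K : V → ℤ} {v : V} (hv : K v + M v v = 0)
    (h : ¬ HasGoodPath M (applyMove M K v)) : ¬ HasGoodPath M K :=
  fun hg => h (good_step M hsymm hM hv hg)

lemma bad_append {K : V → ℤ} {a b : List V} (ha : PathLegal M K a)
    (hb : BadFullPath M (pathEnd M K a) b) : BadFullPath M K (a ++ b) := by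
  obtain ⟨hbl, u, hu⟩ := hb
  exact ⟨pathLegal_append M ha hbl, u, by rw [pathEnd_append]; exact hu⟩

end Machinery

def vx (n k : ℕ) : Fin (n + 3) := ⟨k % (n + 3), Nat.mod_lt _ (by omega)⟩
lemma vx_val {n k : ℕ} (h : k < n + 3) : (vx n k).val = k := Nat.mod_eq_of_lt h
lemma vx_self (n : ℕ) (i : Fin (n+3)) : vx n i.val = i := by
  apply Fin.ext; exact vx_val i.isLt
lemma MG_symm (n : ℕ) (i j : Fin (n+3)) : MG n i j = MG n j i := by
  unfold MG
  rcases eq_or_ne i j with rfl | hne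
  · simp
  · rw [if_neg hne, if_neg hne.symm]
    have : adjG i.val j.val ↔ adjG j.val i.val := by unfold adjG; omega
    simp only [this]

lemma MG_offdiag (n : ℕ) (v i : Fin (n+3)) (h : v ≠ i) : 0 ≤ MG n v i := by
  unfold MG
  rw [if_neg h]
  split <;> norm_num

lemma MG_diag (n : ℕ) (i : Fin (n+3)) : MG n i i = wt i.val := by simp [MG]

lemma MG_eval (n a b : ℕ) (ha : a < n+3) (hb : b < n+3) :
    MG n (vx n a) (vx n b) = if a = b then wt a else if adjG a b then 1 else 0 := by
  unfold MG
  rw [vx_val ha, vx_val hb]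
  have : (vx n a = vx n b) ↔ a = b := by
    rw [Fin.ext_iff, vx_val ha, vx_val hb]
  simp only [this]
lemma MG_fin (n a : ℕ) (ha : a < n+3) (i : Fin (n+3)) :
    MG n (vx n a) i = if a = i.val then wt a else if adjG a i.val then 1 else 0 := by
  conv_lhs => rw [← vx_self n i]
  exact MG_eval n a i.val ha i.isLt

-- MG small entries
section Small
variable {n : ℕ}
lemma MG00 : MG n (vx n 0) (vx n 0) = -1 := by rw [MG_eval n 0 0 (by omega) (by omega)]; decide
lemma MG01 : MG n (vx n 0) (vx n 1) = 1 := by rw [MG_eval n 0 1 (by omega) (by omega)]; decide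
lemma MG02 : MG n (vx n 0) (vx n 2) = 1 := by rw [MG_eval n 0 2 (by omega) (by omega)]; decide
lemma MG03 (hn : 1 ≤ n) : MG n (vx n 0) (vx n 3) = 1 := by rw [MG_eval n 0 3 (by omega) (by omega)]; decide
lemma MG10 : MG n (vx n 1) (vx n 0) = 1 := by rw [MG_eval n 1 0 (by omega) (by omega)]; decide
lemma MG11 : MG n (vx n 1) (vx n 1) = -2 := by rw [MG_eval n 1 1 (by omega) (by omega)]; decide
lemma MG12 : MG n (vx n 1) (vx n 2) = 0 := by rw [MG_eval n 1 2 (by omega) (by omega)]; decide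
lemma MG13 (hn : 1 ≤ n) : MG n (vx n 1) (vx n 3) = 0 := by rw [MG_eval n 1 3 (by omega) (by omega)]; decide
lemma MG20 : MG n (vx n 2) (vx n 0) = 1 := by rw [MG_eval n 2 0 (by omega) (by omega)]; decide
lemma MG21 : MG n (vx n 2) (vx n 1) = 0 := by rw [MG_eval n 2 1 (by omega) (by omega)]; decide
lemma MG22 : MG n (vx n 2) (vx n 2) = -3 := by rw [MG_eval n 2 2 (by omega) (by omega)]; decide
lemma MG23 (hn : 1 ≤ n) : MG n (vx n 2) (vx n 3) = 0 := by rw [MG_eval n 2 3 (by omega) (by omega)]; decide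
lemma MG30 (hn : 1 ≤ n) : MG n (vx n 3) (vx n 0) = 1 := by rw [MG_eval n 3 0 (by omega) (by omega)]; decide
lemma MG31 (hn : 1 ≤ n) : MG n (vx n 3) (vx n 1) = 0 := by rw [MG_eval n 3 1 (by omega) (by omega)]; decide
lemma MG32 (hn : 1 ≤ n) : MG n (vx n 3) (vx n 2) = 0 := by rw [MG_eval n 3 2 (by omega) (by omega)]; decide
lemma MG33 (hn : 1 ≤ n) : MG n (vx n 3) (vx n 3) = -7 := by rw [MG_eval n 3 3 (by omega) (by omega)]; decide
end Small

-- Bad path lemmas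
variable {n : ℕ} {K : Fin (n+3) → ℤ}

lemma bad1 (h0 : K (vx n 0) = 1) (h1 : K (vx n 1) = 2) :
    BadFullPath (MG n) K [vx n 1] := by
  refine ⟨⟨?_, trivial⟩, vx n 0, ?_⟩ <;>
    simp [pathEnd, applyMove, MG00, MG10, MG11, h0, h1]

lemma bad8 (hn : 1 ≤ n) (h0 : K (vx n 0) = 1) (h1 : K (vx n 1) = 0) (h2 : K (vx n 2) = -1)
    (h3 : K (vx n 3) = -1) :
    BadFullPath (MG n) K
      [vx n 0, vx n 1, vx n 0, vx n 2, vx n 0, vx n 1, vx n 0, vx n 3, vx n 0, vx n 2, vx n 1] := by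
  refine ⟨?_, vx n 0, ?_⟩ <;>
    simp [PathLegal, pathEnd, applyMove, MG00, MG01, MG02, MG10, MG11, MG12,
      MG20, MG21, MG22, MG23 hn, MG30 hn, MG31 hn, MG32 hn, MG33 hn, MG03 hn, MG13 hn, h0, h1, h2, h3]

lemma bad2 (h0 : K (vx n 0) = 1) (h2 : K (vx n 2) = 3) :
    BadFullPath (MG n) K [vx n 2] := by
  refine ⟨⟨?_, trivial⟩, vx n 0, ?_⟩ <;>
    simp [pathEnd, applyMove, MG00, MG20, MG22, h0, h2]

lemma bad3 (h0 : K (vx n 0) = 1) (h1 : K (vx n 1) = 0) (h2 : K (vx n 2) = 1) :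
    BadFullPath (MG n) K [vx n 0, vx n 2, vx n 1] := by
  refine ⟨?_, vx n 0, ?_⟩ <;>
    simp [PathLegal, pathEnd, applyMove, MG00, MG01, MG02, MG10, MG11, MG12,
      MG20, MG21, MG22, h0, h1, h2]

lemma bad4 (hn : 1 ≤ n) (h0 : K (vx n 0) = 1) (h3 : K (vx n 3) = 7) :
    BadFullPath (MG n) K [vx n 3] := by
  refine ⟨⟨?_, trivial⟩, vx n 0, ?_⟩ <;>
    simp [pathEnd, applyMove, MG00, MG30 hn, MG33 hn, h0, h3]

lemma bad5 (hn : 1 ≤ n) (h0 : K (vx n 0) = 1) (h1 : K (vx n 1) = 0) (h3 : K (vx n 3) = 5) :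
    BadFullPath (MG n) K [vx n 0, vx n 3, vx n 1] := by
  refine ⟨?_, vx n 0, ?_⟩ <;>
    simp [PathLegal, pathEnd, applyMove, MG00, MG01, MG02, MG10, MG11, MG12,
      MG03 hn, MG13 hn, MG30 hn, MG31 hn, MG33 hn, h0, h1, h3]

lemma bad6 (hn : 1 ≤ n) (h0 : K (vx n 0) = 1) (h1 : K (vx n 1) = 0) (h2 : K (vx n 2) = -1)
    (h3 : K (vx n 3) = 3) :
    BadFullPath (MG n) K [vx n 0, vx n 1, vx n 0, vx n 3, vx n 2] := by
  refine ⟨?_, vx n 0, ?_⟩ <;>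
    simp [PathLegal, pathEnd, applyMove, MG00, MG01, MG02, MG10, MG11, MG12,
      MG20, MG21, MG22, MG23 hn, MG03 hn, MG13 hn, MG30 hn, MG31 hn, MG32 hn, MG33 hn,
      h0, h1, h2, h3]

lemma bad7 (hn : 1 ≤ n) (h0 : K (vx n 0) = 1) (h1 : K (vx n 1) = 0) (h2 : K (vx n 2) = -1)
    (h3 : K (vx n 3) = 1) :
    BadFullPath (MG n) K [vx n 0, vx n 1, vx n 0, vx n 2, vx n 0, vx n 3, vx n 1] := by
  refine ⟨?_, vx n 0, ?_⟩ <;>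
    simp [PathLegal, pathEnd, applyMove, MG00, MG01, MG02, MG10, MG11, MG12,
      MG20, MG21, MG22, MG23 hn, MG03 hn, MG13 hn, MG30 hn, MG31 hn, MG32 hn, MG33 hn,
      h0, h1, h2, h3]

-- generic row evaluation helpers
lemma MG_row0 (i : Fin (n+3)) (hi : 4 ≤ i.val) : MG n (vx n 0) i = 0 := by
  rw [MG_fin n 0 (by omega), if_neg (by omega), if_neg (by unfold adjG; omega)]
lemma MG_row1 (i : Fin (n+3)) (hi : 4 ≤ i.val) : MG n (vx n 1) i = 0 := by
  rw [MG_fin n 1 (by omega), if_neg (by omega), if_neg (by unfold adjG; omega)]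
lemma MG_row2 (i : Fin (n+3)) (hi : 4 ≤ i.val) : MG n (vx n 2) i = 0 := by
  rw [MG_fin n 2 (by omega), if_neg (by omega), if_neg (by unfold adjG; omega)]
lemma MG_row3 (hn : 1 ≤ n) (i : Fin (n+3)) (hi : 5 ≤ i.val) : MG n (vx n 3) i = 0 := by
  rw [MG_fin n 3 (by omega), if_neg (by omega), if_neg (by unfold adjG; omega)]
lemma MG_row3' (hn : 1 ≤ n) (i : Fin (n+3)) (hi : i.val = 4) : MG n (vx n 3) i = 1 := by
  rw [MG_fin n 3 (by omega), if_neg (by omega), if_pos (by unfold adjG; omega)]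

-- the pump
lemma pump (h0 : K (vx n 0) = 1) (h1 : K (vx n 1) = 0) (h2 : K (vx n 2) = -1) :
    PathLegal (MG n) K [vx n 0, vx n 1, vx n 0, vx n 2, vx n 0, vx n 1, vx n 0] ∧
    ∀ i : Fin (n+3),
      pathEnd (MG n) K [vx n 0, vx n 1, vx n 0, vx n 2, vx n 0, vx n 1, vx n 0] i =
      if i.val = 0 then -1 else if i.val = 1 then 0 else if i.val = 2 then 1
      else if i.val = 3 then K i + 8 else K i := by
  constructor
  · simp [PathLegal, applyMove, MG00, MG01, MG02, MG10, MG11, MG12,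
      MG20, MG21, MG22, h0, h1, h2]
  · intro i
    simp only [pathEnd, List.foldl, applyMove]
    rcases Nat.lt_or_ge i.val 4 with hi | hi
    · interval_cases h : i.val
      · rw [show i = vx n 0 from by rw [← vx_self n i, h]]
        simp [MG00, MG10, MG20, h0]
      · rw [show i = vx n 1 from by rw [← vx_self n i, h]]
        simp [MG01, MG11, MG21, h1]
      · rw [show i = vx n 2 from by rw [← vx_self n i, h]]
        simp [MG02, MG12, MG22, h2]
      · have e0 : MG n (vx n 0) i = 1 := by
          rw [MG_fin n 0 (by omega), h, if_neg (by omega), if_pos (by unfold adjG; omega)]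
        have e1 : MG n (vx n 1) i = 0 := by
          rw [MG_fin n 1 (by omega), h, if_neg (by omega), if_neg (by unfold adjG; omega)]
        have e2 : MG n (vx n 2) i = 0 := by
          rw [MG_fin n 2 (by omega), h, if_neg (by omega), if_neg (by unfold adjG; omega)]
        simp [e0, e1, e2, h]
        ring
    · have e0 := MG_row0 (n := n) i hi
      have e1 := MG_row1 (n := n) i hi
      have e2 := MG_row2 (n := n) i hi
      rw [if_neg (by omega), if_neg (by omega), if_neg (by omega), if_neg (by omega)]
      simp [e0, e1, e2]

lemma wt_big_s11 {p : ℕ} (hp : 4 ≤ p) : wt p = -2 := by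
  unfold wt
  rw [if_neg (by omega), if_neg (by omega), if_neg (by omega), if_neg (by omega)]

lemma adj_big {p c : ℕ} (hp : 4 ≤ p) : adjG p c ↔ (c + 1 = p ∨ c = p + 1) := by
  unfold adjG; omega

lemma MG_rowp (p : ℕ) (hp4 : 4 ≤ p) (hp : p ≤ n + 2) (i : Fin (n+3)) :
    MG n (vx n p) i = if i.val = p then -2 else if i.val + 1 = p ∨ i.val = p + 1 then 1
      else 0 := by
  rw [MG_fin n p (by omega)]
  by_cases h : i.val = p
  · rw [if_pos h.symm, if_pos h, wt_big_s11 hp4]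
  · rw [if_neg (fun hh => h hh.symm), if_neg h]
    by_cases ha : adjG p i.val
    · rw [if_pos ha, if_pos ((adj_big hp4).mp ha)]
    · rw [if_neg ha, if_neg (fun hc => ha ((adj_big hp4).mpr hc))]

/-- descending list [a, a-1, ..., a-m] -/
def dnL : ℕ → ℕ → List ℕ
  | a, 0 => [a]
  | a, m+1 => a :: dnL (a-1) m

/-- Left travel: from a single `2` at position `4+k` (zeros at 4..3+k),
firing `4+k, 3+k, ..., 4`. -/
lemma left_travel (k : ℕ) : ∀ (K : Fin (n+3) → ℤ), 4 + k ≤ n + 2 →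
    K (vx n (4+k)) = 2 → (∀ i, 4 ≤ i → i < 4+k → K (vx n i) = 0) →
    PathLegal (MG n) K ((dnL (4+k) k).map (vx n)) ∧
    ∀ i : Fin (n+3), pathEnd (MG n) K ((dnL (4+k) k).map (vx n)) i =
      if i.val = 3 then K i + 2 else if i.val = 4 then -2
      else if 5 ≤ i.val ∧ i.val ≤ 4+k then 0
      else if i.val = 5+k then K i + 2 else K i := by
  induction k with
  | zero =>
    intro K hk hKp _
    constructor
    · refine ⟨?_, trivial⟩
      rw [MG_rowp 4 (by omega) (by omega), if_pos (by rw [vx_val (by omega)])]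
      rw [hKp]; ring
    · intro i
      show applyMove (MG n) K (vx n 4) i = _
      unfold applyMove
      rw [MG_rowp 4 (by omega) (by omega)]
      by_cases h3 : i.val = 3
      · rw [if_neg (by omega), if_pos (by omega), if_pos h3]; ring
      by_cases h4 : i.val = 4
      · rw [if_pos h4, if_neg h3, if_pos h4]
        have : i = vx n 4 := by rw [← vx_self n i, h4]
        rw [this, hKp]; ring
      by_cases h5 : i.val = 5
      · rw [if_neg h4, if_pos (by omega), if_neg h3, if_neg h4, if_neg (by omega),
          if_pos (by omega)]
        ring
      · rw [if_neg h4, if_neg (by omega), if_neg h3, if_neg h4, if_neg (by omega),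
          if_neg (by omega)]
        ring
  | succ k ih =>
    intro K hk hKp hmid
    have hleg1 : K (vx n (5+k)) + MG n (vx n (5+k)) (vx n (5+k)) = 0 := by
      rw [MG_rowp (5+k) (by omega) (by omega), if_pos (by rw [vx_val (by omega)])]
      rw [show (4 + (k+1)) = 5 + k from by omega] at hKp
      rw [hKp]; ring
    set K' := applyMove (MG n) K (vx n (5+k)) with hK'
    have hrow : ∀ i : Fin (n+3), MG n (vx n (5+k)) i =
        if i.val = 5+k then -2 else if i.val + 1 = 5+k ∨ i.val = 5+k+1 then 1 else 0 :=
      fun i => MG_rowp (5+k) (by omega) (by omega) i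
    have h1 : K' (vx n (4+k)) = 2 := by
      rw [hK']; unfold applyMove
      rw [hrow, vx_val (by omega), if_neg (by omega), if_pos (by omega),
        hmid (4+k) (by omega) (by omega)]
      ring
    have h2 : ∀ i, 4 ≤ i → i < 4+k → K' (vx n i) = 0 := by
      intro i hi1 hi2
      rw [hK']; unfold applyMove
      rw [hrow, vx_val (by omega), if_neg (by omega), if_neg (by omega),
        hmid i hi1 (by omega)]
      ring
    obtain ⟨hlegIH, hendIH⟩ := ih K' (by omega) h1 h2
    have hlist : dnL (4+(k+1)) (k+1) = (5+k) :: dnL (4+k) k := by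
      rw [show 4+(k+1) = 5+k from by omega]
      simp only [dnL]
      rw [show 5+k-1 = 4+k from by omega]
    rw [hlist]
    constructor
    · exact ⟨hleg1, hlegIH⟩
    · intro i
      rw [List.map_cons]
      rw [show pathEnd (MG n) K (vx n (5+k) :: (dnL (4+k) k).map (vx n)) =
        pathEnd (MG n) K' ((dnL (4+k) k).map (vx n)) from rfl]
      rw [hendIH i]
      have hKi : K' i = K i + 2 * (if i.val = 5+k then -2
          else if i.val + 1 = 5+k ∨ i.val = 5+k+1 then 1 else 0) := by
        rw [hK']; unfold applyMove; rw [hrow]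
      by_cases h3 : i.val = 3
      · rw [if_pos h3, if_pos h3, hKi, if_neg (by omega), if_neg (by omega)]; ring
      by_cases h4 : i.val = 4
      · rw [if_neg h3, if_pos h4, if_neg h3, if_pos h4]
      by_cases hmidr : 5 ≤ i.val ∧ i.val ≤ 4+k
      · rw [if_neg h3, if_neg h4, if_pos hmidr, if_neg h3, if_neg h4,
          if_pos (by omega)]
      by_cases htop : i.val = 5+k
      · rw [if_neg h3, if_neg h4, if_neg hmidr, if_pos htop, if_neg h3, if_neg h4,
          if_pos (by omega), hKi, if_pos htop]
        have : i = vx n (5+k) := by rw [← vx_self n i, htop]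
        rw [this]
        rw [show (4 + (k+1)) = 5 + k from by omega] at hKp
        rw [hKp]; ring
      by_cases hnext : i.val = 6+k
      · rw [if_neg h3, if_neg h4, if_neg hmidr, if_neg htop, if_neg h3, if_neg h4,
          if_neg (by omega), if_pos (by omega), hKi, if_neg htop, if_pos (by omega)]
        ring
      · rw [if_neg h3, if_neg h4, if_neg hmidr, if_neg htop, if_neg h3, if_neg h4,
          if_neg (by omega), if_neg (by omega), hKi, if_neg htop, if_neg (by omega)]
        ring

/-- Block travel: `-2` at `s`, zeros strictly between, `2` at `s+1+m`;
fire `s+1+m, s+m, ..., s+1`. -/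
lemma lt2 (m : ℕ) : ∀ (s : ℕ) (K : Fin (n+3) → ℤ), 4 ≤ s → s + 1 + m ≤ n + 2 →
    K (vx n s) = -2 → (∀ i, s < i → i < s+1+m → K (vx n i) = 0) →
    K (vx n (s+1+m)) = 2 →
    PathLegal (MG n) K ((dnL (s+1+m) m).map (vx n)) ∧
    ∀ i : Fin (n+3), pathEnd (MG n) K ((dnL (s+1+m) m).map (vx n)) i =
      if i.val = s then 0 else if i.val = s+1 then -2
      else if s+2 ≤ i.val ∧ i.val ≤ s+1+m then 0
      else if i.val = s+2+m then K i + 2 else K i := by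
  induction m with
  | zero =>
    intro s K hs hq hKs _ hKq
    have hrow := fun i => MG_rowp (n := n) (s+1) (by omega) (by omega) i
    constructor
    · refine ⟨?_, trivial⟩
      rw [hrow, if_pos (by rw [vx_val (by omega)]), hKq]; ring
    · intro i
      show applyMove (MG n) K (vx n (s+1)) i = _
      unfold applyMove
      rw [hrow]
      by_cases h1 : i.val = s
      · rw [if_neg (by omega), if_pos (by omega), if_pos h1,
          show i = vx n s from by rw [← vx_self n i, h1], hKs]
        ring
      by_cases h2 : i.val = s+1
      · rw [if_pos h2, if_neg h1, if_pos h2,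
          show i = vx n (s+1) from by rw [← vx_self n i, h2], hKq]
        ring
      by_cases h3 : i.val = s+2
      · rw [if_neg h2, if_pos (by omega), if_neg h1, if_neg h2, if_neg (by omega),
          if_pos (by omega)]
        ring
      · rw [if_neg h2, if_neg (by omega), if_neg h1, if_neg h2, if_neg (by omega),
          if_neg (by omega)]
        ring
  | succ m ih =>
    intro s K hs hq hKs hmid hKq
    have hrow := fun i => MG_rowp (n := n) (s+2+m) (by omega) (by omega) i
    have hq' : s+1+(m+1) = s+2+m := by omega
    rw [hq'] at hKq ⊢
    have hleg1 : K (vx n (s+2+m)) + MG n (vx n (s+2+m)) (vx n (s+2+m)) = 0 := by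
      rw [hrow, if_pos (by rw [vx_val (by omega)]), hKq]; ring
    set K' := applyMove (MG n) K (vx n (s+2+m)) with hK'
    have hKi : ∀ i : Fin (n+3), K' i = K i + 2 * (if i.val = s+2+m then -2
        else if i.val + 1 = s+2+m ∨ i.val = s+2+m+1 then 1 else 0) := by
      intro i; rw [hK']; unfold applyMove; rw [hrow]
    have h1 : K' (vx n s) = -2 := by
      rw [hKi, vx_val (by omega), if_neg (by omega), if_neg (by omega), hKs]; ring
    have h2 : ∀ i, s < i → i < s+1+m → K' (vx n i) = 0 := by
      intro i hi1 hi2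
      rw [hKi, vx_val (by omega), if_neg (by omega), if_neg (by omega),
        hmid i hi1 (by omega)]
      ring
    have h3 : K' (vx n (s+1+m)) = 2 := by
      rw [hKi, vx_val (by omega), if_neg (by omega), if_pos (by omega),
        hmid (s+1+m) (by omega) (by omega)]
      ring
    obtain ⟨hlegIH, hendIH⟩ := ih s K' hs (by omega) h1 h2 h3
    have hlist : dnL (s+2+m) (m+1) = (s+2+m) :: dnL (s+1+m) m := by
      simp only [dnL]
      rw [show s+2+m-1 = s+1+m from by omega]
    rw [hlist]
    refine ⟨⟨hleg1, hlegIH⟩, ?_⟩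
    intro i
    rw [List.map_cons]
    rw [show pathEnd (MG n) K (vx n (s+2+m) :: (dnL (s+1+m) m).map (vx n)) =
      pathEnd (MG n) K' ((dnL (s+1+m) m).map (vx n)) from rfl]
    rw [hendIH i]
    by_cases c1 : i.val = s
    · rw [if_pos c1, if_pos c1]
    by_cases c2 : i.val = s+1
    · rw [if_neg c1, if_pos c2, if_neg c1, if_pos c2]
    by_cases c3 : s+2 ≤ i.val ∧ i.val ≤ s+1+m
    · rw [if_neg c1, if_neg c2, if_pos c3, if_neg c1, if_neg c2, if_pos (by omega)]
    by_cases c4 : i.val = s+2+m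
    · rw [if_neg c1, if_neg c2, if_neg c3, if_pos c4, if_neg c1, if_neg c2,
        if_pos (by omega), hKi, if_pos c4,
        show i = vx n (s+2+m) from by rw [← vx_self n i, c4], hKq]
      ring
    by_cases c5 : i.val = s+3+m
    · rw [if_neg c1, if_neg c2, if_neg c3, if_neg c4, if_neg c1, if_neg c2,
        if_neg (by omega), if_pos (by omega), hKi, if_neg c4, if_pos (by omega)]
      ring
    · rw [if_neg c1, if_neg c2, if_neg c3, if_neg c4, if_neg c1, if_neg c2,
        if_neg (by omega), if_neg (by omega), hKi, if_neg c4, if_neg (by omega)]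
      ring

/-- Iterating blocks: chain has zeros, `-2` at `s`, `2` at `s+g`, zeros to the right;
there is a legal path ending with chain all `0` except `-2` at `n+3-g`,
other coordinates unchanged. -/
lemma blocks (g : ℕ) (hg : 1 ≤ g) : ∀ (m s : ℕ) (K : Fin (n+3) → ℤ), 4 ≤ s →
    s + g + m = n + 2 →
    (∀ i, 4 ≤ i → i < s → K (vx n i) = 0) → K (vx n s) = -2 →
    (∀ i, s < i → i < s + g → K (vx n i) = 0) → K (vx n (s+g)) = 2 →
    (∀ i, s + g < i → i ≤ n + 2 → K (vx n i) = 0) →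
    ∃ l, PathLegal (MG n) K l ∧ ∀ i : Fin (n+3), pathEnd (MG n) K l i =
      if 4 ≤ i.val then (if i.val = n + 3 - g then -2 else 0) else K i := by
  intro m
  induction m with
  | zero =>
    intro s K hs hsum hleft hKs hmid hKq _
    obtain ⟨hleg, hend⟩ := lt2 (n := n) (g-1) s K hs (by omega) hKs
      (by intro i h1 h2; exact hmid i h1 (by omega)) (by rw [show s+1+(g-1) = s+g from by omega]; exact hKq)
    refine ⟨_, hleg, ?_⟩
    intro i
    have hlt := i.isLt
    rw [hend i]
    by_cases c1 : i.val = s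
    · rw [if_pos c1, if_pos (by omega), if_neg (by omega)]
    by_cases c2 : i.val = s+1
    · rw [if_neg c1, if_pos c2, if_pos (by omega), if_pos (by omega)]
    by_cases c3 : s+2 ≤ i.val ∧ i.val ≤ s+1+(g-1)
    · rw [if_neg c1, if_neg c2, if_pos c3, if_pos (by omega), if_neg (by omega)]
    · have hc4 : ¬ i.val = s+2+(g-1) := by omega
      rw [if_neg c1, if_neg c2, if_neg c3, if_neg hc4]
      by_cases c5 : 4 ≤ i.val
      · rw [if_pos c5, if_neg (by omega), ← vx_self n i]
        exact hleft i.val c5 (by omega)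
      · rw [if_neg c5]
  | succ m ih =>
    intro s K hs hsum hleft hKs hmid hKq hright
    obtain ⟨hleg, hend⟩ := lt2 (n := n) (g-1) s K hs (by omega) hKs
      (by intro i h1 h2; exact hmid i h1 (by omega)) (by rw [show s+1+(g-1) = s+g from by omega]; exact hKq)
    set K1 := pathEnd (MG n) K ((dnL (s+1+(g-1)) (g-1)).map (vx n)) with hK1
    have e1 : ∀ i, 4 ≤ i → i < s+1 → K1 (vx n i) = 0 := by
      intro i hi1 hi2
      rw [hend, vx_val (by omega)]
      by_cases c1 : i = s
      · rw [if_pos c1]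
      · rw [if_neg c1, if_neg (by omega), if_neg (by omega), if_neg (by omega)]
        exact hleft i hi1 (by omega)
    have e2 : K1 (vx n (s+1)) = -2 := by
      rw [hend, vx_val (by omega), if_neg (by omega), if_pos rfl]
    have e3 : ∀ i, s+1 < i → i < s+1+g → K1 (vx n i) = 0 := by
      intro i hi1 hi2
      rw [hend, vx_val (by omega), if_neg (by omega), if_neg (by omega),
        if_pos (by omega)]
    have e4 : K1 (vx n (s+1+g)) = 2 := by
      rw [hend, vx_val (by omega), if_neg (by omega), if_neg (by omega),
        if_neg (by omega), if_pos (by omega),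
        hright (s+1+g) (by omega) (by omega)]
      ring
    have e5 : ∀ i, s+1+g < i → i ≤ n+2 → K1 (vx n i) = 0 := by
      intro i hi1 hi2
      rw [hend, vx_val (by omega), if_neg (by omega), if_neg (by omega),
        if_neg (by omega), if_neg (by omega)]
      exact hright i (by omega) hi2
    obtain ⟨l2, hleg2, hend2⟩ := ih (s+1) K1 (by omega) (by omega) e1 e2 e3 e4 e5
    refine ⟨_ ++ l2, pathLegal_append _ hleg hleg2, ?_⟩
    intro i
    rw [pathEnd_append, ← hK1, hend2 i]
    by_cases c5 : 4 ≤ i.val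
    · rw [if_pos c5, if_pos c5]
    · rw [if_neg c5, if_neg c5, hend, if_neg (by omega), if_neg (by omega),
        if_neg (by omega), if_neg (by omega)]

section Assembly
variable {n : ℕ} {K : Fin (n+3) → ℤ}

lemma bad_pair (p : ℕ) (h4 : 4 ≤ p) (hp : p + 1 ≤ n + 2)
    (hKp : K (vx n p) = 2) (hKq : K (vx n (p+1)) = 2) :
    BadFullPath (MG n) K [vx n p] := by
  have hrow := fun i => MG_rowp (n := n) p h4 (by omega) i
  refine ⟨⟨?_, trivial⟩, vx n (p+1), ?_⟩
  · rw [hrow, if_pos (by rw [vx_val (by omega)]), hKp]; ring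
  · show K (vx n (p+1)) + 2 * MG n (vx n p) (vx n (p+1)) +
      MG n (vx n (p+1)) (vx n (p+1)) > 0
    rw [hrow, MG_rowp (p+1) (by omega) (by omega), vx_val (by omega),
      if_pos rfl, if_neg (by omega), if_pos (by omega), hKq]
    norm_num

lemma no_good_two (d : ℕ) : ∀ (p : ℕ) (K : Fin (n+3) → ℤ), 4 ≤ p → p + 1 + d ≤ n + 2 →
    K (vx n p) = 2 → K (vx n (p+1+d)) = 2 →
    (∀ i, p < i → i < p+1+d → K (vx n i) = 0 ∨ K (vx n i) = 2) →
    ¬ HasGoodPath (MG n) K := by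
  induction d with
  | zero =>
    intro p K h4 hp hKp hKq _
    exact not_good_of_bad _ (MG_symm n) (MG_offdiag n) (bad_pair p h4 hp hKp hKq)
  | succ d ih =>
    intro p K h4 hp hKp hKq hmid
    rcases hmid (p+1) (by omega) (by omega) with h0 | h2
    · have hrow := fun i => MG_rowp (n := n) p h4 (by omega) i
      refine not_good_step _ (MG_symm n) (MG_offdiag n) (v := vx n p) ?_ ?_
      · rw [hrow, if_pos (by rw [vx_val (by omega)]), hKp]; ring
      · set K' := applyMove (MG n) K (vx n p) with hK'
        have hKi : ∀ i : Fin (n+3), K' i = K i + 2 * (if i.val = p then -2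
            else if i.val + 1 = p ∨ i.val = p+1 then 1 else 0) := by
          intro i; rw [hK']; unfold applyMove; rw [hrow]
        refine ih (p+1) K' (by omega) (by omega) ?_ ?_ ?_
        · rw [hKi, vx_val (by omega), if_neg (by omega), if_pos (by omega), h0]; ring
        · rw [hKi, vx_val (by omega), if_neg (by omega), if_neg (by omega)]
          rw [show p+1+1+d = p+1+(d+1) from by omega, hKq]; ring
        · intro i hi1 hi2
          rw [hKi, vx_val (by omega), if_neg (by omega), if_neg (by omega)]
          have := hmid i (by omega) (by omega)
          omega
    · exact not_good_of_bad _ (MG_symm n) (MG_offdiag n) (bad_pair p h4 (by omega) hKp h2)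

lemma wt_cases (a : ℕ) : wt a = -1 ∨ wt a = -2 ∨ wt a = -3 ∨ wt a = -7 := by
  unfold wt; split_ifs <;> norm_num

/-- `-3`-case with a single `2` on the chain is bad. -/
lemma not_good_neg3 (hn : 1 ≤ n) (k : ℕ) (hk : 4 + k ≤ n + 2)
    (h0 : K (vx n 0) = 1) (h1 : K (vx n 1) = 0) (h2 : K (vx n 2) = -1)
    (h3 : K (vx n 3) = -3) (hKp : K (vx n (4+k)) = 2)
    (hmid : ∀ i, 4 ≤ i → i < 4+k → K (vx n i) = 0) :
    ¬ HasGoodPath (MG n) K := by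
  obtain ⟨hleg, hend⟩ := left_travel (n := n) k K hk hKp hmid
  refine not_good_of_bad _ (MG_symm n) (MG_offdiag n)
    (bad_append _ hleg (bad8 hn ?_ ?_ ?_ ?_))
  · rw [hend, vx_val (by omega), if_neg (by omega), if_neg (by omega),
      if_neg (by omega), if_neg (by omega), h0]
  · rw [hend, vx_val (by omega), if_neg (by omega), if_neg (by omega),
      if_neg (by omega), if_neg (by omega), h1]
  · rw [hend, vx_val (by omega), if_neg (by omega), if_neg (by omega),
      if_neg (by omega), if_neg (by omega), h2]
  · rw [hend, vx_val (by omega), if_pos rfl, h3]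
    norm_num

end Assembly

section Good
variable {n : ℕ} {K : Fin (n+3) → ℤ}

/-- `K_1` and `K_2` (chain all zero, `K_3 ∈ {-5,-3}`) support good full paths. -/
lemma good_K12 (h0 : K (vx n 0) = 1) (h1 : K (vx n 1) = 0) (h2 : K (vx n 2) = -1)
    (h3 : K (vx n 3) = -5 ∨ K (vx n 3) = -3)
    (hch : ∀ i, 4 ≤ i → i ≤ n + 2 → K (vx n i) = 0) :
    HasGoodPath (MG n) K := by
  obtain ⟨hleg, hend⟩ := pump h0 h1 h2
  refine ⟨_, hleg, ?_⟩
  intro v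
  have hlt := v.isLt
  simp only [MG_diag]
  rw [hend v]
  by_cases c0 : v.val = 0
  · rw [if_pos c0, c0]; unfold wt; norm_num
  by_cases c1 : v.val = 1
  · rw [if_neg c0, if_pos c1, c1]; unfold wt; norm_num
  by_cases c2 : v.val = 2
  · rw [if_neg c0, if_neg c1, if_pos c2, c2]; unfold wt; norm_num
  by_cases c3 : v.val = 3
  · rw [if_neg c0, if_neg c1, if_neg c2, if_pos c3, c3,
      show v = vx n 3 from by rw [← vx_self n v, c3]]
    unfold wt; norm_num; omega
  · rw [if_neg c0, if_neg c1, if_neg c2, if_neg c3, wt_big_s11 (by omega),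
      show v = vx n v.val from (vx_self n v).symm, hch v.val (by omega) (by omega)]
    norm_num

/-- `K_j` for `3 ≤ j ≤ n+1` (single `2` at chain position `p = j+1`). -/
lemma good_Kj (k : ℕ) (hk : 4 + k ≤ n + 2)
    (h0 : K (vx n 0) = 1) (h1 : K (vx n 1) = 0) (h2 : K (vx n 2) = -1)
    (h3 : K (vx n 3) = -5) (hKp : K (vx n (4+k)) = 2)
    (hch : ∀ i, 4 ≤ i → i ≤ n + 2 → i ≠ 4 + k → K (vx n i) = 0) :
    HasGoodPath (MG n) K := by
  obtain ⟨hleg1, hend1⟩ := pump h0 h1 h2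
  set K1 := pathEnd (MG n) K
    [vx n 0, vx n 1, vx n 0, vx n 2, vx n 0, vx n 1, vx n 0] with hK1
  have hch1 : ∀ i : Fin (n+3), 4 ≤ i.val → K1 i = K i := by
    intro i hi
    rw [hend1 i, if_neg (by omega), if_neg (by omega), if_neg (by omega),
      if_neg (by omega)]
  obtain ⟨hleg2, hend2⟩ := left_travel (n := n) k K1 hk
    (by rw [hch1 _ (by rw [vx_val (by omega)]; omega)]; exact hKp)
    (by intro i hi1 hi2
        rw [hch1 _ (by rw [vx_val (by omega)]; omega)]
        exact hch i hi1 (by omega) (by omega))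
  set K2 := pathEnd (MG n) K1 ((dnL (4+k) k).map (vx n)) with hK2
  have hK2v : ∀ i : Fin (n+3),
      K2 i = if i.val = 3 then 5 else if i.val = 4 then -2
        else if 5 ≤ i.val ∧ i.val ≤ 4+k then 0
        else if i.val = 5+k then 2 else K1 i := by
    intro i
    rw [hend2 i]
    by_cases c3 : i.val = 3
    · rw [if_pos c3, if_pos c3, hend1 i, if_neg (by omega), if_neg (by omega),
        if_neg (by omega), if_pos c3, show i = vx n 3 from by rw [← vx_self n i, c3], h3]
      norm_num
    by_cases c4 : i.val = 4
    · rw [if_neg c3, if_pos c4, if_neg c3, if_pos c4]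
    by_cases cm : 5 ≤ i.val ∧ i.val ≤ 4+k
    · rw [if_neg c3, if_neg c4, if_pos cm, if_neg c3, if_neg c4, if_pos cm]
    by_cases ct : i.val = 5+k
    · rw [if_neg c3, if_neg c4, if_neg cm, if_pos ct, if_neg c3, if_neg c4,
        if_neg cm, if_pos ct, hch1 i (by omega),
        show i = vx n (5+k) from by rw [← vx_self n i, ct],
        hch (5+k) (by omega) (by omega) (by omega)]
      norm_num
    · rw [if_neg c3, if_neg c4, if_neg cm, if_neg ct, if_neg c3, if_neg c4,
        if_neg cm, if_neg ct]
  have hlegA : PathLegal (MG n) K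
      ([vx n 0, vx n 1, vx n 0, vx n 2, vx n 0, vx n 1, vx n 0] ++
        (dnL (4+k) k).map (vx n)) := pathLegal_append _ hleg1 hleg2
  have hendA : pathEnd (MG n) K
      ([vx n 0, vx n 1, vx n 0, vx n 2, vx n 0, vx n 1, vx n 0] ++
        (dnL (4+k) k).map (vx n)) = K2 := by
    rw [pathEnd_append, ← hK1, ← hK2]
  -- values of K1 below 4
  have hv0 : K1 (vx n 0) = -1 := by
    rw [hend1, vx_val (by omega)]; norm_num
  have hv1 : K1 (vx n 1) = 0 := by
    rw [hend1, vx_val (by omega)]; norm_num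
  have hv2 : K1 (vx n 2) = 1 := by
    rw [hend1, vx_val (by omega)]; norm_num
  rcases Nat.lt_or_ge (4+k) (n+2) with hlast | hlast
  · -- blocks phase needed
    have hg : 1 ≤ k + 1 := by omega
    obtain ⟨l3, hleg3, hend3⟩ := blocks (n := n) (k+1) hg (n+2-(4+k)-1) 4 K2 (by omega)
      (by omega)
      (by intro i h1 h2; omega)
      (by rw [hK2v, vx_val (by omega)]; norm_num)
      (by intro i hi1 hi2
          rw [hK2v, vx_val (by omega), if_neg (by omega), if_neg (by omega),
            if_pos (by omega)])
      (by rw [hK2v, vx_val (by omega), if_neg (by omega), if_neg (by omega),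
          if_neg (by omega), if_pos (by omega)])
      (by intro i hi1 hi2
          rw [hK2v, vx_val (by omega), if_neg (by omega), if_neg (by omega),
            if_neg (by omega), if_neg (by omega), hch1 _ (by rw [vx_val (by omega)]; omega)]
          exact hch i (by omega) hi2 (by omega))
    refine ⟨_ ++ l3, pathLegal_append _ hlegA (by rw [hendA]; exact hleg3), ?_⟩
    intro v
    have hlt := v.isLt
    simp only [MG_diag]
    rw [pathEnd_append, hendA, hend3 v]
    by_cases c : 4 ≤ v.val
    · rw [if_pos c, wt_big_s11 (by omega)]
      by_cases ce : v.val = n + 3 - (k + 1)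
      · rw [if_pos ce]; norm_num
      · rw [if_neg ce]; norm_num
    · rw [if_neg c, hK2v]
      by_cases c3 : v.val = 3
      · rw [if_pos c3, c3]; unfold wt; norm_num
      rw [if_neg c3, if_neg (by omega), if_neg (by omega), if_neg (by omega)]
      by_cases c0 : v.val = 0
      · rw [show v = vx n 0 from by rw [← vx_self n v, c0], hv0, vx_val (by omega)]; unfold wt; norm_num
      by_cases c1 : v.val = 1
      · rw [show v = vx n 1 from by rw [← vx_self n v, c1], hv1, vx_val (by omega)]; unfold wt; norm_num
      · have c2 : v.val = 2 := by omega
        rw [show v = vx n 2 from by rw [← vx_self n v, c2], hv2, vx_val (by omega)]; unfold wt; norm_num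
  · -- p = n+2 : already good after descent
    refine ⟨_, hlegA, ?_⟩
    intro v
    have hlt := v.isLt
    simp only [MG_diag]
    rw [hendA, hK2v v]
    by_cases c3 : v.val = 3
    · rw [if_pos c3, c3]; unfold wt; norm_num
    by_cases c4 : v.val = 4
    · rw [if_neg c3, if_pos c4, c4]; unfold wt; norm_num
    by_cases cm : 5 ≤ v.val ∧ v.val ≤ 4+k
    · rw [if_neg c3, if_neg c4, if_pos cm, wt_big_s11 (by omega)]; norm_num
    by_cases ct : v.val = 5+k
    · exfalso; omega
    · rw [if_neg c3, if_neg c4, if_neg cm, if_neg ct]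
      by_cases c0 : v.val = 0
      · rw [show v = vx n 0 from by rw [← vx_self n v, c0], hv0, vx_val (by omega)]; unfold wt; norm_num
      by_cases c1 : v.val = 1
      · rw [show v = vx n 1 from by rw [← vx_self n v, c1], hv1, vx_val (by omega)]; unfold wt; norm_num
      by_cases c2 : v.val = 2
      · rw [show v = vx n 2 from by rw [← vx_self n v, c2], hv2, vx_val (by omega)]; unfold wt; norm_num
      · exfalso; omega

end Good

section Counting
variable {n : ℕ}

def cf (a : ℕ) : ℕ :=
  if a = 0 then 1 else if a = 1 then 2 else if a = 2 then 3 else if a = 3 then 7 else 2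

def Lf (a : ℕ) : Finset ℤ :=
  if a = 0 then {1} else if a = 1 then {0, 2} else if a = 2 then {-1, 1, 3}
  else if a = 3 then {-5, -3, -1, 1, 3, 5, 7} else {0, 2}

lemma mem_Lf (a : ℕ) (x : ℤ) :
    x ∈ Lf a ↔ (2 ∣ (x - wt a) ∧ wt a + 2 ≤ x ∧ x ≤ -wt a) := by
  unfold Lf wt
  split_ifs <;> simp [Finset.mem_insert] <;> omega

lemma card_Lf (a : ℕ) : (Lf a).card = cf a := by
  unfold Lf cf; split_ifs <;> decide

lemma peel (m : ℕ) (f : ℕ → ℕ) :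
    ∏ i : Fin (m+1), f i.val = f 0 * ∏ i : Fin m, f (i.val+1) := by
  rw [Fin.prod_univ_succ]
  simp [Fin.val_succ]

lemma prod_card (hn : 1 ≤ n) :
    ∏ i : Fin (n+3), (Lf i.val).card = 42 * 2 ^ (n-1) := by
  obtain ⟨m, rfl⟩ : ∃ m, n = m + 1 := ⟨n - 1, by omega⟩
  simp only [card_Lf]
  rw [show m+1+3 = (m+3)+1 from by omega, peel (m+3) cf]
  rw [show m+3 = (m+2)+1 from by omega, peel (m+2) (fun a => cf (a+1))]
  rw [show m+2 = (m+1)+1 from by omega, peel (m+1) (fun a => cf (a+1+1))]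
  rw [peel m (fun a => cf (a+1+1+1))]
  have : ∀ i : Fin m, cf (i.val+1+1+1+1) = 2 := by
    intro i
    unfold cf
    rw [if_neg (by omega), if_neg (by omega), if_neg (by omega), if_neg (by omega)]
  rw [Finset.prod_congr rfl (fun i _ => this i), Finset.prod_const]
  have hc0 : cf 0 = 1 := rfl
  have hc1 : cf (0+1) = 2 := rfl
  have hc2 : cf (0+1+1) = 3 := rfl
  have hc3 : cf (0+1+1+1) = 7 := rfl
  rw [hc0, hc1, hc2, hc3]
  simp
  ring

lemma set_eq_pi :
    {K : Fin (n + 3) → ℤ | (∀ i, (2 : ℤ) ∣ (K i - MG n i i)) ∧ InBounds (MG n) K} =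
      ↑(Fintype.piFinset (fun i : Fin (n+3) => Lf i.val)) := by
  ext K
  simp only [Set.mem_setOf_eq, Finset.coe_sort_coe, Finset.mem_coe,
    Fintype.mem_piFinset, mem_Lf]
  constructor
  · rintro ⟨hd, hb⟩ i
    have h1 := hd i
    have h2 := hb i
    rw [MG_diag] at h1 h2
    exact ⟨h1, h2⟩
  · intro h
    exact ⟨fun i => by rw [MG_diag]; exact (h i).1,
      fun i => by rw [MG_diag]; exact (h i).2⟩

lemma count_part (hn : 1 ≤ n) :
    Set.ncard {K : Fin (n + 3) → ℤ |
      (∀ i, (2 : ℤ) ∣ (K i - MG n i i)) ∧ InBounds (MG n) K} = 42 * 2 ^ (n - 1) := by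
  rw [set_eq_pi, Set.ncard_coe_finset, Fintype.card_piFinset, prod_card hn]

end Counting


section KvFacts
variable {n : ℕ}

lemma Kv_vx (j a : ℕ) (ha : a < n+3) : Kv n j (vx n a) =
    if a = 0 then 1 else if a = 1 then 0 else if a = 2 then -1
    else if a = 3 then (if j = 2 then -3 else -5)
    else if 3 ≤ j ∧ a = j + 1 then 2 else 0 := by
  unfold Kv
  rw [vx_val ha]

/-- Each `Kv n j` is characteristic and in bounds. -/
lemma Kv_mem (hn : 1 ≤ n) (j : ℕ) (hj1 : 1 ≤ j) (hj2 : j ≤ n + 1) :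
    (∀ i, (2 : ℤ) ∣ (Kv n j i - MG n i i)) ∧ InBounds (MG n) (Kv n j) := by
  have key : ∀ i : Fin (n+3), (2 : ℤ) ∣ (Kv n j i - MG n i i) ∧
      MG n i i + 2 ≤ Kv n j i ∧ Kv n j i ≤ -(MG n i i) := by
    intro i
    have hlt := i.isLt
    rw [MG_diag, show i = vx n i.val from (vx_self n i).symm, Kv_vx j i.val hlt,
      vx_val hlt]
    by_cases c0 : i.val = 0
    · rw [if_pos c0, c0]; unfold wt; norm_num
    by_cases c1 : i.val = 1
    · rw [if_neg c0, if_pos c1, c1]; unfold wt; norm_num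
    by_cases c2 : i.val = 2
    · rw [if_neg c0, if_neg c1, if_pos c2, c2]; unfold wt; norm_num
    by_cases c3 : i.val = 3
    · rw [if_neg c0, if_neg c1, if_neg c2, if_pos c3, c3]
      unfold wt; norm_num
      split_ifs <;> omega
    · rw [if_neg c0, if_neg c1, if_neg c2, if_neg c3, wt_big_s11 (by omega)]
      split_ifs <;> norm_num
  exact ⟨fun i => (key i).1, fun i => ⟨(key i).2.1, (key i).2.2⟩⟩

lemma Kv_good (hn : 1 ≤ n) (j : ℕ) (hj1 : 1 ≤ j) (hj2 : j ≤ n + 1) :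
    HasGoodPath (MG n) (Kv n j) := by
  have e0 : Kv n j (vx n 0) = 1 := by rw [Kv_vx j 0 (by omega)]; norm_num
  have e1 : Kv n j (vx n 1) = 0 := by rw [Kv_vx j 1 (by omega)]; norm_num
  have e2 : Kv n j (vx n 2) = -1 := by rw [Kv_vx j 2 (by omega)]; norm_num
  rcases Nat.lt_or_ge j 3 with hj3 | hj3
  · -- j = 1 or 2 : chain is zero
    refine good_K12 e0 e1 e2 ?_ ?_
    · rw [Kv_vx j 3 (by omega)]
      norm_num
      tauto
    · intro i hi1 hi2
      rw [Kv_vx j i (by omega), if_neg (by omega), if_neg (by omega),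
        if_neg (by omega), if_neg (by omega), if_neg (by omega)]
  · -- j ≥ 3 : single 2 at position j+1
    refine good_Kj (j - 3) (by omega) e0 e1 e2 ?_ ?_ ?_
    · rw [Kv_vx j 3 (by omega), if_neg (by omega), if_neg (by omega),
        if_neg (by omega), if_pos rfl, if_neg (by omega)]
    · rw [Kv_vx j (4 + (j-3)) (by omega), if_neg (by omega), if_neg (by omega),
        if_neg (by omega), if_neg (by omega), if_pos (by omega)]
    · intro i hi1 hi2 hi3
      rw [Kv_vx j i (by omega), if_neg (by omega), if_neg (by omega),
        if_neg (by omega), if_neg (by omega), if_neg (by omega)]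

end KvFacts

section Classify
variable {n : ℕ}

open Classical in
/-- Any characteristic vector in bounds with a good full path is one of the `Kv n j`. -/
lemma classify (hn : 1 ≤ n) (K : Fin (n+3) → ℤ)
    (hd : ∀ i, (2 : ℤ) ∣ (K i - MG n i i)) (hb : InBounds (MG n) K)
    (hg : HasGoodPath (MG n) K) :
    ∃ j : ℕ, 1 ≤ j ∧ j ≤ n + 1 ∧ K = Kv n j := by
  have hval : ∀ a, a < n + 3 → (2 : ℤ) ∣ (K (vx n a) - wt a) ∧
      wt a + 2 ≤ K (vx n a) ∧ K (vx n a) ≤ -wt a := by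
    intro a ha
    have h1 := hd (vx n a)
    have h2 := hb (vx n a)
    rw [MG_diag, vx_val ha] at h1 h2
    exact ⟨h1, h2⟩
  have w0 : wt 0 = -1 := rfl
  have w1 : wt 1 = -2 := rfl
  have w2 : wt 2 = -3 := rfl
  have w3 : wt 3 = -7 := rfl
  have h0 : K (vx n 0) = 1 := by have := hval 0 (by omega); rw [w0] at this; omega
  have h1 : K (vx n 1) = 0 := by
    have hv := hval 1 (by omega); rw [w1] at hv
    by_contra hne
    have : K (vx n 1) = 2 := by omega
    exact not_good_of_bad _ (MG_symm n) (MG_offdiag n) (bad1 h0 this) hg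
  have h2 : K (vx n 2) = -1 := by
    have hv := hval 2 (by omega); rw [w2] at hv
    by_contra hne
    rcases (by omega : K (vx n 2) = 1 ∨ K (vx n 2) = 3) with hc | hc
    · exact not_good_of_bad _ (MG_symm n) (MG_offdiag n) (bad3 h0 h1 hc) hg
    · exact not_good_of_bad _ (MG_symm n) (MG_offdiag n) (bad2 h0 hc) hg
  have h3 : K (vx n 3) = -5 ∨ K (vx n 3) = -3 := by
    have hv := hval 3 (by omega); rw [w3] at hv
    by_contra hne
    rcases (by omega : K (vx n 3) = -1 ∨ K (vx n 3) = 1 ∨ K (vx n 3) = 3 ∨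
      K (vx n 3) = 5 ∨ K (vx n 3) = 7) with hc | hc | hc | hc | hc
    · exact not_good_of_bad _ (MG_symm n) (MG_offdiag n) (bad8 hn h0 h1 h2 hc) hg
    · exact not_good_of_bad _ (MG_symm n) (MG_offdiag n) (bad7 hn h0 h1 h2 hc) hg
    · exact not_good_of_bad _ (MG_symm n) (MG_offdiag n) (bad6 hn h0 h1 h2 hc) hg
    · exact not_good_of_bad _ (MG_symm n) (MG_offdiag n) (bad5 hn h0 h1 hc) hg
    · exact not_good_of_bad _ (MG_symm n) (MG_offdiag n) (bad4 hn h0 hc) hg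
  have hchain : ∀ a, 4 ≤ a → a ≤ n + 2 → K (vx n a) = 0 ∨ K (vx n a) = 2 := by
    intro a ha1 ha2
    have hv := hval a (by omega)
    rw [wt_big_s11 ha1] at hv
    omega
  have htwo : ∀ p q, 4 ≤ p → p < q → q ≤ n + 2 →
      K (vx n p) = 2 → K (vx n q) = 2 → False := by
    intro p q hp hpq hq hKp hKq
    refine no_good_two (q - p - 1) p K hp (by omega) hKp ?_ ?_ hg
    · rw [show p + 1 + (q - p - 1) = q from by omega]; exact hKq
    · intro i hi1 hi2; exact hchain i (by omega) (by omega)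
  by_cases hex : ∃ a, 4 ≤ a ∧ a ≤ n + 2 ∧ K (vx n a) = 2
  · -- a single 2 at the least such position p
    obtain ⟨a0, ha0⟩ := hex
    have hP : ∃ a, 4 ≤ a ∧ a ≤ n + 2 ∧ K (vx n a) = 2 := ⟨a0, ha0⟩
    set p := Nat.find hP with hp
    obtain ⟨hp4, hpn, hKp⟩ := Nat.find_spec hP
    have hmin : ∀ i, 4 ≤ i → i < p → K (vx n i) = 0 := by
      intro i hi1 hi2
      rcases hchain i hi1 (by omega) with h | h
      · exact h
      · have hnm := Nat.find_min hP (m := i) (by omega)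
        exact absurd ⟨hi1, by omega, h⟩ hnm
    have hupper : ∀ i, p < i → i ≤ n + 2 → K (vx n i) = 0 := by
      intro i hi1 hi2
      rcases hchain i (by omega) hi2 with h | h
      · exact h
      · exact absurd (htwo p i hp4 hi1 hi2 hKp h) (fun x => x)
    rcases h3 with hm5 | hm3
    · -- K = Kv n (p-1)
      refine ⟨p - 1, by omega, by omega, ?_⟩
      funext i
      have hlt := i.isLt
      rw [show i = vx n i.val from (vx_self n i).symm, Kv_vx (p-1) i.val hlt]
      by_cases c0 : i.val = 0
      · rw [if_pos c0, c0]; exact h0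
      by_cases c1 : i.val = 1
      · rw [if_neg c0, if_pos c1, c1]; exact h1
      by_cases c2 : i.val = 2
      · rw [if_neg c0, if_neg c1, if_pos c2, c2]; exact h2
      by_cases c3 : i.val = 3
      · rw [if_neg c0, if_neg c1, if_neg c2, if_pos c3, if_neg (by omega), c3]; exact hm5
      rw [if_neg c0, if_neg c1, if_neg c2, if_neg c3]
      by_cases cp : i.val = p
      · rw [if_pos (by omega), cp]; exact hKp
      · rw [if_neg (by omega)]
        rcases Nat.lt_or_ge i.val p with hlp | hgp
        · exact hmin i.val (by omega) hlp
        · exact hupper i.val (by omega) (by omega)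
    · -- chain 2 together with K3 = -3 : impossible
      exact absurd hg (not_good_neg3 hn (p - 4) (by omega) h0 h1 h2 hm3
        (by rw [show 4 + (p-4) = p from by omega]; exact hKp)
        (by intro i hi1 hi2; exact hmin i hi1 (by omega)))
  · -- chain all zero
    push_neg at hex
    have hzero : ∀ a, 4 ≤ a → a ≤ n + 2 → K (vx n a) = 0 := by
      intro a ha1 ha2
      rcases hchain a ha1 ha2 with h | h
      · exact h
      · exact absurd h (hex a ha1 ha2)
    rcases h3 with hm5 | hm3
    · refine ⟨1, le_rfl, by omega, ?_⟩
      funext i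
      have hlt := i.isLt
      rw [show i = vx n i.val from (vx_self n i).symm, Kv_vx 1 i.val hlt]
      by_cases c0 : i.val = 0
      · rw [if_pos c0, c0]; exact h0
      by_cases c1 : i.val = 1
      · rw [if_neg c0, if_pos c1, c1]; exact h1
      by_cases c2 : i.val = 2
      · rw [if_neg c0, if_neg c1, if_pos c2, c2]; exact h2
      by_cases c3 : i.val = 3
      · rw [if_neg c0, if_neg c1, if_neg c2, if_pos c3, if_neg (by omega), c3]; exact hm5
      · rw [if_neg c0, if_neg c1, if_neg c2, if_neg c3, if_neg (by omega)]
        exact hzero i.val (by omega) (by omega)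
    · refine ⟨2, by omega, by omega, ?_⟩
      funext i
      have hlt := i.isLt
      rw [show i = vx n i.val from (vx_self n i).symm, Kv_vx 2 i.val hlt]
      by_cases c0 : i.val = 0
      · rw [if_pos c0, c0]; exact h0
      by_cases c1 : i.val = 1
      · rw [if_neg c0, if_pos c1, c1]; exact h1
      by_cases c2 : i.val = 2
      · rw [if_neg c0, if_neg c1, if_pos c2, c2]; exact h2
      by_cases c3 : i.val = 3
      · rw [if_neg c0, if_neg c1, if_neg c2, if_pos c3, if_pos rfl, c3]; exact hm3
      · rw [if_neg c0, if_neg c1, if_neg c2, if_neg c3, if_neg (by omega)]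
        exact hzero i.val (by omega) (by omega)

end Classify

lemma Kv_injOn {n : ℕ} (hn : 1 ≤ n) :
    Set.InjOn (fun j => Kv n j) (Set.Icc 1 (n+1)) := by
  intro j hj j' hj' heq
  simp only [Set.mem_Icc] at hj hj'
  by_contra hne
  have hev : ∀ (a : ℕ), a < n+3 → Kv n j (vx n a) = Kv n j' (vx n a) := by
    intro a _
    simp only at heq
    rw [heq]
  rcases eq_or_ne j 2 with rfl | hj2
  · have := hev 3 (by omega)
    rw [Kv_vx 2 3 (by omega), Kv_vx j' 3 (by omega)] at this
    rw [if_neg (by omega), if_neg (by omega), if_neg (by omega), if_pos rfl,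
      if_pos rfl, if_neg (by omega), if_neg (by omega), if_neg (by omega),
      if_pos rfl, if_neg (fun h => hne h.symm)] at this
    norm_num at this
  rcases eq_or_ne j' 2 with rfl | hj'2
  · have := hev 3 (by omega)
    rw [Kv_vx j 3 (by omega), Kv_vx 2 3 (by omega)] at this
    rw [if_neg (by omega), if_neg (by omega), if_neg (by omega), if_pos rfl,
      if_neg hj2, if_neg (by omega), if_neg (by omega), if_neg (by omega),
      if_pos rfl, if_pos rfl] at this
    norm_num at this
  rcases le_or_gt 3 j with h3 | h3
  · have := hev (j+1) (by omega)
    rw [Kv_vx j (j+1) (by omega), Kv_vx j' (j+1) (by omega)] at this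
    rw [if_neg (by omega), if_neg (by omega), if_neg (by omega), if_neg (by omega),
      if_pos ⟨h3, rfl⟩, if_neg (by omega), if_neg (by omega), if_neg (by omega),
      if_neg (by omega), if_neg (by omega)] at this
    norm_num at this
  · have hj1 : j = 1 := by omega
    have hj'3 : 3 ≤ j' := by omega
    have := hev (j'+1) (by omega)
    rw [Kv_vx j (j'+1) (by omega), Kv_vx j' (j'+1) (by omega)] at this
    rw [if_neg (by omega), if_neg (by omega), if_neg (by omega), if_neg (by omega),
      if_neg (by omega), if_neg (by omega), if_neg (by omega), if_neg (by omega),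
      if_neg (by omega), if_pos ⟨hj'3, rfl⟩] at this
    norm_num at this


/-- the number of characteristic vectors of `G_n` satisfying
`v·v + 2 ≤ K·v ≤ -v·v` for all `v` is exactly `42 · 2^(n-1)`, and those supporting
good full paths are exactly `K_1, …, K_{n+1}` (so there are `n+1` of them). -/
theorem count_characteristic_and_basic (n : ℕ) (hn : 1 ≤ n) :
    Set.ncard {K : Fin (n + 3) → ℤ |
        (∀ i, (2 : ℤ) ∣ (K i - MG n i i)) ∧ InBounds (MG n) K} = 42 * 2 ^ (n - 1) ∧
    {K : Fin (n + 3) → ℤ |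
        (∀ i, (2 : ℤ) ∣ (K i - MG n i i)) ∧ InBounds (MG n) K ∧ HasGoodPath (MG n) K} =
      {K | ∃ j : ℕ, 1 ≤ j ∧ j ≤ n + 1 ∧ K = Kv n j} ∧
    Set.ncard {K : Fin (n + 3) → ℤ |
        (∀ i, (2 : ℤ) ∣ (K i - MG n i i)) ∧ InBounds (MG n) K ∧ HasGoodPath (MG n) K} =
      n + 1 := by

  have hset : {K : Fin (n + 3) → ℤ |
      (∀ i, (2 : ℤ) ∣ (K i - MG n i i)) ∧ InBounds (MG n) K ∧ HasGoodPath (MG n) K} =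
      {K | ∃ j : ℕ, 1 ≤ j ∧ j ≤ n + 1 ∧ K = Kv n j} := by
    ext K
    simp only [Set.mem_setOf_eq]
    constructor
    · rintro ⟨hd, hb, hg⟩
      exact classify hn K hd hb hg
    · rintro ⟨j, hj1, hj2, rfl⟩
      obtain ⟨hh1, hh2⟩ := Kv_mem hn j hj1 hj2
      exact ⟨hh1, hh2, Kv_good hn j hj1 hj2⟩
  refine ⟨count_part hn, hset, ?_⟩
  rw [hset]
  have himg : {K : Fin (n+3) → ℤ | ∃ j : ℕ, 1 ≤ j ∧ j ≤ n + 1 ∧ K = Kv n j} =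
      (fun j => Kv n j) '' (Set.Icc 1 (n+1)) := by
    ext K
    simp only [Set.mem_setOf_eq, Set.mem_image, Set.mem_Icc]
    constructor
    · rintro ⟨j, hj1, hj2, rfl⟩; exact ⟨j, ⟨hj1, hj2⟩, rfl⟩
    · rintro ⟨j, ⟨hj1, hj2⟩, rfl⟩; exact ⟨j, hj1, hj2, rfl⟩
  rw [himg, Set.ncard_image_of_injOn (Kv_injOn hn)]
  rw [show (Set.Icc 1 (n+1)) = ↑(Finset.Icc 1 (n+1)) from by simp]
  rw [Set.ncard_coe_finset, Nat.card_Icc]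
  omega
end
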